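/- arXiv:2404.01254 — 4 statements merged into one kernel-verified Lean document; each statement's English description precedes it below -/
import Mathlib

section
/- Let p be a prime, G a finite group with Sylow p-subgroup P, d a power of p with p ≤ d ≤ |P|, and N a minimal normal subgroup of G whose order is divisible by d. If every subgroup of P of order d satisfies the partial Π-property in G, then N is elementary abelian of order exactly d. -/
/-- A chief series of a (finite) group `G`. -/
structure ChiefSeries (G : Type*) [Group G] where
  n : ℕ
  s : Fin (n + 1) → Subgroup G
  bot_eq : s 0 = ⊥
  top_eq : s (Fin.last n) = ⊤
  normal : ∀ i, (s i).Normal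
  strict : ∀ i : Fin n, s i.castSucc < s i.succ
  chief : ∀ i : Fin n, ∀ N : Subgroup G, N.Normal →
    s i.castSucc ≤ N → N ≤ s i.succ → N = s i.castSucc ∨ N = s i.succ

variable {G : Type*} [Group G]

/-- The order of the chief factor `s i.succ / s i.castSucc`. -/
noncomputable def ChiefSeries.factorCard (C : ChiefSeries G) (i : Fin C.n) : ℕ :=
  Nat.card (C.s i.succ) / Nat.card (C.s i.castSucc)

/-- The condition of the partial Π-property at the `i`-th chief factor of the chief series `C`:
the index `|G/G_{i-1} : N_{G/G_{i-1}}(HG_{i-1}/G_{i-1} ∩ G_i/G_{i-1})|` is a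
`π(HG_{i-1}/G_{i-1} ∩ G_i/G_{i-1})`-number.  Here we use the identifications
`HG_{i-1}/G_{i-1} ∩ G_i/G_{i-1} = ((H ⊔ G_{i-1}) ⊓ G_i)/G_{i-1}`,
`N_{G/G_{i-1}}(L/G_{i-1}) = N_G(L)/G_{i-1}` for `G_{i-1} ≤ L`, so that the relevant index is
`|G : N_G((H ⊔ G_{i-1}) ⊓ G_i)|` and the order of the intersection is
`|(H ⊔ G_{i-1}) ⊓ G_i| / |G_{i-1}|`. -/
def PartialPiStep (H : Subgroup G) (C : ChiefSeries G) (i : Fin C.n) : Prop :=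
  ∀ q : ℕ, q.Prime →
    q ∣ (Subgroup.normalizer (((H ⊔ C.s i.castSucc) ⊓ C.s i.succ : Subgroup G) : Set G)).index →
    q ∣ Nat.card ((H ⊔ C.s i.castSucc) ⊓ C.s i.succ : Subgroup G) / Nat.card (C.s i.castSucc)

/-- `H` satisfies the partial Π-property in `G`. -/
def PartialPi (H : Subgroup G) : Prop :=
  ∃ C : ChiefSeries G, ∀ i, PartialPiStep H C i

/-- `N` is a minimal normal subgroup of `G`. -/
def IsMinNormal (N : Subgroup G) : Prop :=
  N.Normal ∧ N ≠ ⊥ ∧ ∀ M : Subgroup G, M.Normal → M ≤ N → M = ⊥ ∨ M = N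

/-- `B/A` is a chief factor of `G`. -/
def IsChiefFactor (A B : Subgroup G) : Prop :=
  A.Normal ∧ B.Normal ∧ A < B ∧
    ∀ X : Subgroup G, X.Normal → A ≤ X → X ≤ B → X = A ∨ X = B

/-- `P` is an elementary abelian `p`-subgroup. -/
def IsElemAbelian (p : ℕ) (P : Subgroup G) : Prop :=
  (∀ x ∈ P, ∀ y ∈ P, x * y = y * x) ∧ ∀ x ∈ P, x ^ p = 1

/-- A group is quaternion-free if no section is isomorphic to `Q₈ = QuaternionGroup 2`. -/
def QuaternionFree (P : Type*) [Group P] : Prop :=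
  ∀ (K : Subgroup P) (N : Subgroup K) (hN : N.Normal),
    haveI := hN
    IsEmpty ((K ⧸ N) ≃* QuaternionGroup 2)

/-- `M` is a maximal subgroup of `K`. -/
def IsMaximalIn (M K : Subgroup G) : Prop :=
  M < K ∧ ∀ X : Subgroup G, M < X → X ≤ K → X = K

/-- `Q` is a 2-maximal subgroup of `K`, i.e. a maximal subgroup of a maximal subgroup. -/
def Is2MaximalIn (Q K : Subgroup G) : Prop :=
  ∃ M : Subgroup G, IsMaximalIn Q M ∧ IsMaximalIn M K

/-- The socle: the subgroup generated by all minimal normal subgroups. -/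
noncomputable def socleSub (G : Type*) [Group G] : Subgroup G :=
  ⨆ (N : Subgroup G) (_ : IsMinNormal N), N

/-- The supersoluble hypercenter `Z_U(G)`: the product of all normal subgroups all of whose
`G`-chief factors have prime order. -/
def ZU (G : Type*) [Group G] : Subgroup G :=
  ⨆ (N : Subgroup G) (_ : N.Normal ∧ ∀ A B : Subgroup G, IsChiefFactor A B → B ≤ N →
      (Nat.card B / Nat.card A).Prime), N

/-- The `p`-supersoluble hypercenter `Z_{U_p}(G)`: the product of all normal subgroups all of
whose `G`-chief factors of order divisible by `p` have order `p`. -/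
def ZUp (p : ℕ) (G : Type*) [Group G] : Subgroup G :=
  ⨆ (N : Subgroup G) (_ : N.Normal ∧ ∀ A B : Subgroup G, IsChiefFactor A B → B ≤ N →
      p ∣ Nat.card B / Nat.card A → Nat.card B / Nat.card A = p), N

/-- `G` is `p`-soluble: it has a chief series each of whose factors is a `p`-group or a
`p'`-group. -/
def IsPSolvable (p : ℕ) (G : Type*) [Group G] : Prop :=
  ∃ C : ChiefSeries G, ∀ i : Fin C.n,
    (∃ m : ℕ, C.factorCard i = p ^ m) ∨ ¬ p ∣ C.factorCard i

/-- `G` is `p`-supersoluble: it has a chief series each of whose factors has order `p` or is a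
`p'`-group. -/
def IsPSupersolvable (p : ℕ) (G : Type*) [Group G] : Prop :=
  ∃ C : ChiefSeries G, ∀ i : Fin C.n,
    C.factorCard i = p ∨ ¬ p ∣ C.factorCard i

/-- The `p`-rank of (the `p`-soluble group) `G` is greater than `1`:  `G` is `p`-soluble and has
a chief factor of order `p ^ k` with `k ≥ 2`. -/
def PRankGtOne (p : ℕ) (G : Type*) [Group G] : Prop :=
  IsPSolvable p G ∧ ∃ (C : ChiefSeries G) (i : Fin C.n) (k : ℕ),
    2 ≤ k ∧ C.factorCard i = p ^ k

/-- The subgroup `V` is invariant under conjugation by elements of `H`. -/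
def IsHInvariant (H V : Subgroup G) : Prop :=
  ∀ h ∈ H, ∀ v ∈ V, h * v * h⁻¹ ∈ V

/-- `V` is an irreducible `F_p[H]`-submodule of `P` (here expressed group-theoretically:
a nontrivial `H`-invariant subgroup of `P` with no proper nontrivial `H`-invariant subgroup). -/
def IsIrredHSub (H P V : Subgroup G) : Prop :=
  V ≤ P ∧ V ≠ ⊥ ∧ IsHInvariant H V ∧
    ∀ W : Subgroup G, W ≤ V → IsHInvariant H W → W = ⊥ ∨ W = V

/-- `V` and `W` are `H`-isomorphic: there is a group isomorphism `V ≃ W` commuting with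
conjugation by elements of `H`. -/
def ConjIso (H V W : Subgroup G) : Prop :=
  ∃ φ : V ≃* W, ∀ h ∈ H, ∀ (v : G) (hv : v ∈ V) (hv2 : h * v * h⁻¹ ∈ V),
    ((φ ⟨h * v * h⁻¹, hv2⟩ : W) : G) = h * ((φ ⟨v, hv⟩ : W) : G) * h⁻¹

/-- `V` is an absolutely irreducible `F_p[H]`-submodule of `P`:  it is irreducible and every
`H`-equivariant endomorphism is a power map (i.e. `End_{F_p[H]}(V) ≅ F_p`). -/
def IsAbsIrredSub (H P V : Subgroup G) : Prop :=
  IsIrredHSub H P V ∧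
  ∀ φ : V →* V,
    (∀ h ∈ H, ∀ (v : G) (hv : v ∈ V) (hv2 : h * v * h⁻¹ ∈ V),
      ((φ ⟨h * v * h⁻¹, hv2⟩ : V) : G) = h * ((φ ⟨v, hv⟩ : V) : G) * h⁻¹) →
    ∃ m : ℕ, ∀ v : V, φ v = v ^ m

/-- `Ω_i(D)`: the subgroup generated by the elements of `D` of order dividing `p ^ i`. -/
def omegaSub {P : Type*} [Group P] (D : Subgroup P) (p i : ℕ) : Subgroup P :=
  Subgroup.closure {x : P | x ∈ D ∧ x ^ (p ^ i) = 1}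

/-- `D` is a Thompson critical subgroup of the `p`-group `P`: a characteristic subgroup with
`[P,D] ≤ Z(D)`, `C_P(D) = Z(D)` (equivalently `C_P(D) ≤ D`), and such that every nontrivial
`p'`-automorphism of `P` restricts to a nontrivial automorphism of `D`. -/
def IsThompsonCritical {P : Type*} [Group P] (p : ℕ) (D : Subgroup P) : Prop :=
  D.Characteristic ∧
  ⁅(⊤ : Subgroup P), D⁆ ≤ Subgroup.centralizer (D : Set P) ⊓ D ∧
  Subgroup.centralizer (D : Set P) ≤ D ∧
  ∀ φ : MulAut P, φ ≠ 1 → Nat.Coprime (orderOf φ) p → ∃ x ∈ D, φ x ≠ x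


open Subgroup
open scoped Pointwise
section helpers
variable {G : Type*} [Group G] {G' : Type*} [Group G']

lemma card_map_mul_card [Finite G] (f : G →* G') (K : Subgroup G) :
    Nat.card (K.map f) * Nat.card (f.ker.subgroupOf K) = Nat.card K := by
  have h1 : Nat.card K = Nat.card (K ⧸ (f.domRestrict K).ker) * Nat.card ((f.domRestrict K).ker) :=
    Subgroup.card_eq_card_quotient_mul_card_subgroup _
  have h2 : Nat.card (K ⧸ (f.domRestrict K).ker) = Nat.card (f.domRestrict K).range :=
    Nat.card_congr (QuotientGroup.quotientKerEquivRange (f.domRestrict K)).toEquiv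
  rw [h1, h2, f.restrict_range, MonoidHom.ker_restrict]

lemma eq_pow_of_forall_prime {p : ℕ} (hp : p.Prime) :
    ∀ n : ℕ, n ≠ 0 → (∀ q : ℕ, q.Prime → q ∣ n → q = p) → ∃ t : ℕ, n = p ^ t := by
  intro n
  induction n using Nat.strong_induction_on with
  | _ n ih =>
    intro hn hq
    rcases eq_or_ne n 1 with rfl | hn1
    · exact ⟨0, rfl⟩
    · have hf : n.minFac.Prime := Nat.minFac_prime hn1
      have hdvd : n.minFac ∣ n := Nat.minFac_dvd n
      have hpn : p ∣ n := (hq _ hf hdvd) ▸ hdvd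
      obtain ⟨m, rfl⟩ := hpn
      have hm0 : m ≠ 0 := by rintro rfl; simp at hn
      have hmlt : m < p * m :=
        lt_mul_iff_one_lt_left (Nat.pos_of_ne_zero hm0) |>.mpr hp.one_lt
      obtain ⟨t, ht⟩ := ih m hmlt hm0 (fun q hq' hd => hq q hq' (hd.mul_left p))
      exact ⟨t + 1, by rw [ht, pow_succ, mul_comm]⟩
end helpers


lemma key_lemma {G : Type*} [Group G] [Finite G] {p : ℕ} (hp : p.Prime) {N H : Subgroup G}
    (hN : IsMinNormal N) (hHN : H ≤ N) {a : ℕ} (hcard : Nat.card H = p ^ a)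
    (hPi : PartialPi H) : ∀ q : ℕ, q.Prime → q ∣ (Subgroup.normalizer (H : Set G)).index → q = p := by
  classical
  obtain ⟨C, hC⟩ := hPi
  have hex : ∃ k, ∃ hk : k < C.n + 1, N ≤ C.s ⟨k, hk⟩ :=
    ⟨C.n, Nat.lt_succ_self _, by
      have : (⟨C.n, Nat.lt_succ_self _⟩ : Fin (C.n + 1)) = Fin.last C.n := rfl
      rw [this, C.top_eq]; exact le_top⟩
  obtain ⟨hk, hNk⟩ := Nat.find_spec hex
  have hk0 : Nat.find hex ≠ 0 := by
    intro h
    have h0 : (⟨Nat.find hex, hk⟩ : Fin (C.n + 1)) = 0 := by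
      apply Fin.ext; simpa using h
    rw [h0, C.bot_eq, le_bot_iff] at hNk
    exact hN.2.1 hNk
  obtain ⟨m, hm⟩ : ∃ m, Nat.find hex = m + 1 :=
    ⟨Nat.find hex - 1, (Nat.succ_pred_eq_of_ne_zero hk0).symm⟩
  have hmlt : m < C.n := by omega
  set i : Fin C.n := ⟨m, hmlt⟩ with hi
  have hisucc : (i.succ : Fin (C.n + 1)) = ⟨Nat.find hex, hk⟩ := by
    apply Fin.ext; show m + 1 = Nat.find hex; exact hm.symm
  have hicast : (i.castSucc : Fin (C.n + 1)) = ⟨m, by omega⟩ := by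
    apply Fin.ext; simp [hi]
  set A := C.s i.castSucc with hA
  set B := C.s i.succ with hB
  haveI hAn : A.Normal := C.normal _
  haveI hBn : B.Normal := C.normal _
  have hNB : N ≤ B := by rw [hB, hisucc]; exact hNk
  have hNA : ¬ N ≤ A := by
    rw [hA, hicast]
    intro hle
    exact Nat.find_min hex (by omega : m < Nat.find hex) ⟨by omega, hle⟩
  have hABle : A ≤ B := (C.strict i).le
  -- N ⊓ A = ⊥
  have hNAn : (N ⊓ A).Normal := by
    constructor
    intro n hn g
    exact ⟨hN.1.conj_mem n hn.1 g, hAn.conj_mem n hn.2 g⟩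
  have hNAbot : N ⊓ A = ⊥ := by
    rcases hN.2.2 (N ⊓ A) hNAn inf_le_left with h | h
    · exact h
    · exact absurd (inf_eq_left.mp h) hNA
  have hHAbot : H ⊓ A = ⊥ := by
    rw [← le_bot_iff, ← hNAbot]
    exact inf_le_inf_right A hHN
  have hsupB : H ⊔ A ≤ B := sup_le (hHN.trans hNB) hABle
  have hL : (H ⊔ A) ⊓ B = H ⊔ A := inf_eq_left.mpr hsupB
  -- cardinality of H ⊔ A
  have hcardA : Nat.card A ≠ 0 := Nat.card_pos.ne'
  have hcardsup : Nat.card (H ⊔ A : Subgroup G) = p ^ a * Nat.card A := by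
    have h1 := card_map_mul_card (QuotientGroup.mk' A) (H ⊔ A)
    have h2 := card_map_mul_card (QuotientGroup.mk' A) H
    rw [QuotientGroup.ker_mk'] at h1 h2
    have hAsub : Nat.card (A.subgroupOf (H ⊔ A)) = Nat.card A :=
      Nat.card_congr (subgroupOfEquivOfLe le_sup_right).toEquiv
    have hAsubH : A.subgroupOf H = ⊥ := by
      ext x
      simp only [mem_subgroupOf, Subgroup.mem_bot]
      constructor
      · intro hx
        have : (x : G) ∈ H ⊓ A := ⟨x.2, hx⟩
        rw [hHAbot, Subgroup.mem_bot] at this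
        exact Subtype.ext this
      · rintro rfl; exact A.one_mem
    rw [hAsubH] at h2
    simp only [Subgroup.card_bot, mul_one] at h2
    have hmapsup : (H ⊔ A).map (QuotientGroup.mk' A) = H.map (QuotientGroup.mk' A) := by
      rw [Subgroup.map_sup]
      have : A.map (QuotientGroup.mk' A) = ⊥ := by
        rw [Subgroup.map_eq_bot_iff, QuotientGroup.ker_mk']
      rw [this, sup_bot_eq]
    rw [hmapsup, hAsub, h2, hcard] at h1
    exact h1.symm
  -- H = (H ⊔ A) ⊓ N
  have hHeq : H = (H ⊔ A) ⊓ N := by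
    apply le_antisymm (le_inf le_sup_left hHN)
    intro x hx
    obtain ⟨hx1, hx2⟩ := hx
    have hmem : x ∈ ((H : Set G) * (A : Set G)) := by
      rw [← Subgroup.mul_normal H A]; exact hx1
    obtain ⟨h, hh, a', ha', rfl⟩ := Set.mem_mul.mp hmem
    have ha'N : a' ∈ N := by
      have : h⁻¹ * (h * a') ∈ N := N.mul_mem (N.inv_mem (hHN hh)) hx2
      simpa using this
    have : a' ∈ N ⊓ A := ⟨ha'N, ha'⟩
    rw [hNAbot, Subgroup.mem_bot] at this
    subst this
    simpa using hh
  -- conjugation in N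
  have hconjN : ∀ g x : G, g * x * g⁻¹ ∈ N ↔ x ∈ N := by
    intro g x
    constructor
    · intro h
      have := hN.1.conj_mem _ h g⁻¹
      simpa [mul_assoc] using this
    · intro h; exact hN.1.conj_mem _ h g
  have hnle : Subgroup.normalizer (((H ⊔ A) ⊓ B : Subgroup G) : Set G) ≤ Subgroup.normalizer (H : Set G) := by
    rw [hL]
    intro g hg
    rw [Subgroup.mem_normalizer_iff] at hg ⊢
    intro x
    constructor
    · intro hx
      rw [hHeq] at hx ⊢
      exact ⟨(hg x).mp hx.1, (hconjN g x).mpr hx.2⟩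
    · intro hx
      rw [hHeq] at hx ⊢
      exact ⟨(hg x).mpr hx.1, (hconjN g x).mp hx.2⟩
  intro q hq hqdvd
  have hdvd2 : q ∣ (Subgroup.normalizer (((H ⊔ A) ⊓ B : Subgroup G) : Set G)).index :=
    hqdvd.trans (Subgroup.index_dvd_of_le hnle)
  have := hC i q hq hdvd2
  rw [← hA, ← hB, hL, hcardsup, Nat.mul_div_cancel _ (Nat.pos_of_ne_zero hcardA)] at this
  exact (Nat.prime_dvd_prime_iff_eq hq hp).mp (hq.dvd_of_dvd_pow this)

lemma exists_mul_decomp {G : Type*} [Group G] [Finite G] {p : ℕ} [Fact p.Prime]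
    (P : Sylow p G) {M : Subgroup G} (hq : ∀ q : ℕ, q.Prime → q ∣ M.index → q = p) :
    ∀ g : G, ∃ x ∈ (P : Subgroup G), ∃ m ∈ M, g = x * m := by
  have hM0 : M.index ≠ 0 := Subgroup.index_ne_zero_of_finite
  obtain ⟨t, ht⟩ := eq_pow_of_forall_prime (Fact.out : p.Prime) _ hM0 hq
  set S := M.subgroupOf (P : Subgroup G) with hS
  have hSp : IsPGroup p S := P.2.to_subgroup S
  obtain ⟨σ, hσ⟩ := (IsPGroup.iff_card).mp hSp
  have e1 : S.index * Nat.card S = Nat.card (P : Subgroup G) := Subgroup.index_mul_card S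
  have hScard_dvd : Nat.card S ∣ Nat.card M := by
    have h1 : Nat.card S = Nat.card (S.map (P : Subgroup G).subtype) :=
      Nat.card_congr (Subgroup.equivMapOfInjective S _ (P : Subgroup G).subtype_injective).toEquiv
    have h2 : S.map (P : Subgroup G).subtype ≤ M := by
      rw [hS]
      intro x hx
      obtain ⟨y, hy, rfl⟩ := hx
      exact hy
    rw [h1]
    exact Subgroup.card_dvd_of_le h2
  have hdvdG : p ^ (σ + t) ∣ Nat.card G := by
    rw [← Subgroup.card_mul_index M, pow_add, ← hσ, ← ht]
    exact mul_dvd_mul hScard_dvd dvd_rfl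
  have hPnd : ¬ p ∣ (P : Subgroup G).index := P.not_dvd_index
  have hdvdP : p ^ (σ + t) ∣ Nat.card (P : Subgroup G) := by
    have hco : Nat.Coprime (p ^ (σ + t)) (P : Subgroup G).index :=
      Nat.Coprime.pow_left _ (((Fact.out : p.Prime).coprime_iff_not_dvd).mpr hPnd)
    exact hco.dvd_of_dvd_mul_right (by rwa [Subgroup.card_mul_index (P : Subgroup G)])
  have hdvdS : M.index ∣ S.index := by
    rw [ht]
    have : p ^ σ * p ^ t ∣ S.index * p ^ σ := by
      rw [← pow_add, ← hσ, e1] at *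
      exact hdvdP
    rw [mul_comm (p ^ σ) (p ^ t)] at this
    exact (Nat.mul_dvd_mul_iff_right (pow_pos (Fact.out : p.Prime).pos σ)).mp this
  -- orbit of the trivial coset under P
  have hstab : MulAction.stabilizer (↥(P : Subgroup G)) ((1 : G) : G ⧸ M) = S := by
    ext x
    rw [MulAction.mem_stabilizer_iff, hS, Subgroup.mem_subgroupOf]
    have hxs : (x • ((1 : G) : G ⧸ M)) = ((x : G) * 1 : G) := rfl
    rw [hxs, mul_one]
    constructor
    · intro h
      have := QuotientGroup.eq.mp (h.symm : ((1:G) : G ⧸ M) = ((x : G) : G ⧸ M))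
      simpa using this
    · intro h
      exact (QuotientGroup.eq.mpr (by simpa using M.inv_mem h)).symm
  have horbcard : Nat.card (MulAction.orbit (↥(P : Subgroup G)) ((1 : G) : G ⧸ M)) = S.index := by
    rw [Subgroup.index_eq_card, ← hstab]
    exact Nat.card_congr (MulAction.orbitEquivQuotientStabilizer (↥(P : Subgroup G)) _)
  have horb : MulAction.orbit (↥(P : Subgroup G)) ((1 : G) : G ⧸ M) = Set.univ := by
    apply Set.eq_of_subset_of_ncard_le (Set.subset_univ _)
    rw [Set.ncard_univ, ← Nat.card_coe_set_eq, horbcard]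
    have hcardQ : Nat.card (G ⧸ M) = M.index := (Subgroup.index_eq_card M).symm
    rw [← Subgroup.index_eq_card]
    exact Nat.le_of_dvd (by rw [Subgroup.index_eq_card]; exact Nat.card_pos) hdvdS
  intro g
  have hg : ((g : G) : G ⧸ M) ∈ MulAction.orbit (↥(P : Subgroup G)) ((1 : G) : G ⧸ M) := by
    rw [horb]; trivial
  obtain ⟨x, hx⟩ := MulAction.mem_orbit_iff.mp hg
  have hx' : (((x : G) : G) : G ⧸ M) = (g : G ⧸ M) := by
    have : (x • ((1 : G) : G ⧸ M)) = ((x : G) * 1 : G) := rfl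
    rw [this, mul_one] at hx
    exact hx
  have hm : (x : G)⁻¹ * g ∈ M := QuotientGroup.eq.mp hx'
  exact ⟨x, x.2, (x : G)⁻¹ * g, hm, by group⟩

lemma minNormal_elemAbelian {G : Type*} [Group G] [Finite G] {p : ℕ} [Fact p.Prime]
    {N : Subgroup G} (hN : IsMinNormal N) (hNp : IsPGroup p ↥N) : IsElemAbelian p N := by
  haveI hNt : Nontrivial ↥N := (Subgroup.nontrivial_iff_ne_bot N).mpr hN.2.1
  haveI := hNp.center_nontrivial
  set Z := (Subgroup.center ↥N).map N.subtype with hZ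
  have hZle : Z ≤ N := Subgroup.map_subtype_le _
  have hZnormal : Z.Normal := by
    constructor
    intro n hn g
    obtain ⟨n₀, hn₀, rfl⟩ := hn
    rw [SetLike.mem_coe, Subgroup.mem_center_iff] at hn₀
    have hmemN : g * (n₀ : G) * g⁻¹ ∈ N := hN.1.conj_mem _ n₀.2 g
    have hcent : (⟨g * (n₀ : G) * g⁻¹, hmemN⟩ : ↥N) ∈ Subgroup.center ↥N := by
      rw [Subgroup.mem_center_iff]
      intro m
      have hm' : (g⁻¹ * ↑m * g) ∈ N := by
        have := hN.1.conj_mem _ m.2 g⁻¹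
        simpa [mul_assoc] using this
      have hcomm : Commute (g⁻¹ * (m : G) * g) ((n₀ : ↥N) : G) := by
        have h := hn₀ ⟨g⁻¹ * ↑m * g, hm'⟩
        exact congrArg Subtype.val h
      have hc2 := hcomm.map (MulAut.conj g).toMonoidHom
      have e1 : (MulAut.conj g).toMonoidHom (g⁻¹ * (m : G) * g) = (m : G) := by
        simp [MulAut.conj_apply]; group
      have e2 : (MulAut.conj g).toMonoidHom ((n₀ : ↥N) : G) = g * ↑n₀ * g⁻¹ := by
        simp [MulAut.conj_apply]
      rw [e1, e2] at hc2
      apply Subtype.ext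
      simpa using hc2.eq
    exact Subgroup.mem_map.mpr ⟨_, hcent, by simp⟩
  have hZbot : Z ≠ ⊥ := by
    obtain ⟨c, hc⟩ := exists_ne (1 : Subgroup.center ↥N)
    intro h
    have hcZ : ((c : ↥N) : G) ∈ Z := ⟨c, c.2, rfl⟩
    rw [h, Subgroup.mem_bot] at hcZ
    exact hc (Subtype.ext (Subtype.ext hcZ))
  have hZN : Z = N := (hN.2.2 Z hZnormal hZle).resolve_left hZbot
  have hcomm : ∀ x ∈ N, ∀ y ∈ N, x * y = y * x := by
    intro x hx y hy
    have hxZ : x ∈ Z := hZN.symm ▸ hx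
    obtain ⟨x₀, hx₀, rfl⟩ := hxZ
    have h := (Subgroup.mem_center_iff.mp hx₀) ⟨y, hy⟩
    have h2 := congrArg Subtype.val h
    simpa using h2.symm
  have hpdvd : p ∣ Nat.card ↥N := by
    rcases hNp.card_eq_or_dvd with h | h
    · exact absurd h (Finite.one_lt_card).ne'
    · exact h
  obtain ⟨w, hw⟩ := exists_prime_orderOf_dvd_card' (G := ↥N) p hpdvd
  set Ω : Subgroup G := {
    carrier := {x | x ∈ N ∧ x ^ p = 1}
    one_mem' := ⟨N.one_mem, one_pow p⟩
    mul_mem' := by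
      rintro x y ⟨hxN, hxp⟩ ⟨hyN, hyp⟩
      refine ⟨N.mul_mem hxN hyN, ?_⟩
      have hc : Commute x y := hcomm x hxN y hyN
      rw [hc.mul_pow, hxp, hyp, one_mul]
    inv_mem' := by
      rintro x ⟨hxN, hxp⟩
      exact ⟨N.inv_mem hxN, by rw [inv_pow, hxp, inv_one]⟩ } with hΩ
  have hΩnormal : Ω.Normal := by
    constructor
    rintro x ⟨hxN, hxp⟩ g
    refine ⟨hN.1.conj_mem x hxN g, ?_⟩
    have he : (g * x * g⁻¹) ^ p = g * x ^ p * g⁻¹ := by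
      have := map_pow (MulAut.conj g).toMonoidHom x p
      simpa [MulAut.conj_apply] using this.symm
    rw [he, hxp]
    group
  have hΩle : Ω ≤ N := fun x hx => hx.1
  have hΩbot : Ω ≠ ⊥ := by
    intro h
    have hwp : (w : G) ^ p = 1 := by
      have h1 : ((w ^ p : ↥N) : G) = (w : G) ^ p := by push_cast; rfl
      rw [← h1, ← hw, pow_orderOf_eq_one, OneMemClass.coe_one]
    have hwΩ : (w : G) ∈ Ω := ⟨w.2, hwp⟩
    rw [h, Subgroup.mem_bot] at hwΩ
    have hw1 : w = 1 := Subtype.ext hwΩ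
    rw [hw1, orderOf_one] at hw
    exact (Fact.out : p.Prime).one_lt.ne' hw.symm
  have hΩN : Ω = N := (hN.2.2 Ω hΩnormal hΩle).resolve_left hΩbot
  exact ⟨hcomm, fun x hx => (show x ∈ Ω from hΩN.symm ▸ hx).2⟩

lemma exists_central_orderOf {p : ℕ} [Fact p.Prime] {P : Type*} [Group P] [Finite P]
    (hP : IsPGroup p P) (M : Subgroup P) [hMn : M.Normal] (hdvd : p ∣ Nat.card M) :
    ∃ z : P, z ∈ M ∧ z ∈ Subgroup.center P ∧ orderOf z = p := by
  have hfix : (1 : ↥M) ∈ MulAction.fixedPoints (ConjAct P) ↥M := by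
    intro g
    apply Subtype.ext
    rw [ConjAct.Subgroup.val_conj_smul]
    simp
  obtain ⟨b, hbfix, hb1⟩ :=
    (hP.of_equiv ConjAct.toConjAct).exists_fixed_point_of_prime_dvd_card_of_fixed_point
      (α := ↥M) hdvd hfix
  have hbcen : (b : P) ∈ Subgroup.center P := by
    rw [Subgroup.mem_center_iff]
    intro g
    have := hbfix (ConjAct.toConjAct g)
    have h2 := congrArg Subtype.val this
    rw [ConjAct.Subgroup.val_conj_smul, ConjAct.smul_def, ConjAct.ofConjAct_toConjAct] at h2
    calc g * ↑b = (g * ↑b * g⁻¹) * g := by group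
    _ = ↑b * g := by rw [h2]
  have hbne : (b : P) ≠ 1 := by
    intro h
    apply hb1
    apply Subtype.ext
    simp [h]
  obtain ⟨m, hm⟩ := (IsPGroup.iff_orderOf.mp hP) (b : P)
  have hm1 : m ≠ 0 := by
    rintro rfl
    rw [pow_zero, orderOf_eq_one_iff] at hm
    exact hbne hm
  set z := (b : P) ^ (p ^ (m - 1)) with hz
  have hzp : z ^ p = 1 := by
    rw [hz, ← pow_mul, ← pow_succ, Nat.sub_add_cancel (by omega : 1 ≤ m), ← hm, pow_orderOf_eq_one]
  have hzne : z ≠ 1 := by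
    intro h
    have := orderOf_dvd_of_pow_eq_one h
    rw [hm] at this
    have hlt : p ^ (m - 1) < p ^ m :=
      Nat.pow_lt_pow_right (Fact.out : p.Prime).one_lt (by omega)
    exact absurd (Nat.le_of_dvd (pow_pos (Fact.out : p.Prime).pos _) this) (by omega)
  refine ⟨z, M.pow_mem b.2 _, Subgroup.pow_mem _ hbcen _, orderOf_eq_prime hzp hzne⟩

lemma exists_normal_le_card_pow {p : ℕ} [Fact p.Prime] :
    ∀ (a : ℕ) {P : Type*} [Group P] [Finite P] (hP : IsPGroup p P)
      (M : Subgroup P) (hMn : M.Normal), p ^ a ∣ Nat.card M →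
      ∃ H : Subgroup P, H.Normal ∧ H ≤ M ∧ Nat.card H = p ^ a := by
  intro a
  induction a with
  | zero =>
    intro P _ _ hP M hMn _
    exact ⟨⊥, inferInstance, bot_le, by simp⟩
  | succ a ih =>
    intro P _ _ hP M hMn hdvd
    haveI := hMn
    have hpdvd : p ∣ Nat.card M := (dvd_pow_self p (Nat.succ_ne_zero a)).trans hdvd
    obtain ⟨z, hzM, hzC, hzp⟩ := exists_central_orderOf hP M hpdvd
    set Z := Subgroup.zpowers z with hZ
    have hZle : Z ≤ M := (Subgroup.zpowers_le).mpr hzM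
    haveI hZn : Z.Normal := by
      constructor
      intro n hn g
      have hncen : n ∈ Subgroup.center P :=
        (Subgroup.zpowers_le.mpr hzC) hn
      have h := Subgroup.mem_center_iff.mp hncen g
      have heq : g * n * g⁻¹ = n := by
        calc g * n * g⁻¹ = n * g * g⁻¹ := by rw [h]
        _ = n := by group
      rw [heq]
      exact hn
    have hZcard : Nat.card Z = p := by rw [hZ, Nat.card_zpowers, hzp]
    set f := QuotientGroup.mk' Z with hf
    set M' := M.map f with hM'
    haveI hM'n : M'.Normal := Subgroup.Normal.map hMn f (QuotientGroup.mk'_surjective Z)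
    have hP' : IsPGroup p (P ⧸ Z) := hP.to_quotient Z
    have hcardM : Nat.card M' * p = Nat.card M := by
      have h := card_map_mul_card f M
      rw [QuotientGroup.ker_mk'] at h
      have : Nat.card (Z.subgroupOf M) = p := by
        rw [Nat.card_congr (Subgroup.subgroupOfEquivOfLe hZle).toEquiv, hZcard]
      rwa [this] at h
    have hdvd' : p ^ a ∣ Nat.card M' := by
      have : p ^ a * p ∣ Nat.card M' * p := by
        rw [hcardM, ← pow_succ]
        exact hdvd
      exact (Nat.mul_dvd_mul_iff_right (Fact.out : p.Prime).pos).mp this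
    obtain ⟨H', hH'n, hH'le, hH'card⟩ := ih hP' M' hM'n hdvd'
    refine ⟨H'.comap f, Subgroup.Normal.comap hH'n f, ?_, ?_⟩
    · calc H'.comap f ≤ M'.comap f := Subgroup.comap_mono hH'le
      _ = M ⊔ f.ker := Subgroup.comap_map_eq f M
      _ = M := by rw [QuotientGroup.ker_mk' (G := P)]; exact sup_eq_left.mpr hZle
    · have hker : f.ker ≤ H'.comap f := by
        intro x hx
        rw [Subgroup.mem_comap, MonoidHom.mem_ker.mp hx]
        exact H'.one_mem
      have hmap : (H'.comap f).map f = H' :=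
        Subgroup.map_comap_eq_self_of_surjective (QuotientGroup.mk'_surjective Z) H'
      have h := card_map_mul_card f (H'.comap f)
      rw [hmap, hH'card] at h
      have hZH : Nat.card (f.ker.subgroupOf (H'.comap f)) = p := by
        rw [Nat.card_congr (Subgroup.subgroupOfEquivOfLe hker).toEquiv,
          QuotientGroup.ker_mk' (G := P), hZcard]
      rw [hZH] at h
      rw [← h, pow_succ]

theorem statement_7 {G : Type*} [Group G] [Finite G] {p : ℕ} (hp : p.Prime)
    (P : Sylow p G) (d : ℕ) (hdpow : ∃ a : ℕ, d = p ^ a)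
    (hd1 : p ≤ d) (hd2 : d ≤ Nat.card (P : Subgroup G))
    (N : Subgroup G) (hN : IsMinNormal N) (hdvd : d ∣ Nat.card N)
    (hPi : ∀ H : Subgroup G, H ≤ P → Nat.card H = d → PartialPi H) :
    IsElemAbelian p N ∧ Nat.card N = d := by
  haveI : Fact p.Prime := ⟨hp⟩
  obtain ⟨av, hd⟩ := hdpow
  have hd2' : 2 ≤ d := hp.two_le.trans hd1
  -- Step 0 : find a subgroup of P ∩ N of order d
  obtain ⟨Q⟩ : Nonempty (Sylow p ↥N) := inferInstance
  have hQdvd : p ^ av ∣ Nat.card Q.1 :=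
    Sylow.pow_dvd_card_of_pow_dvd_card Q (hd ▸ hdvd)
  set Q' : Subgroup G := Q.1.map N.subtype with hQ'def
  have hQ'card : Nat.card Q.1 = Nat.card Q' :=
    Nat.card_congr (Subgroup.equivMapOfInjective _ _ N.subtype_injective).toEquiv
  have hQ'N : Q' ≤ N := Subgroup.map_subtype_le _
  have hQ'p : IsPGroup p Q' := Q.2.map N.subtype
  obtain ⟨R, hR⟩ := hQ'p.exists_le_sylow
  obtain ⟨g, hg⟩ := MulAction.exists_smul_eq G R P
  set Q'' : Subgroup G := Q'.map (MulAut.conj g).toMonoidHom with hQ''def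
  have hQ''P : Q'' ≤ (P : Subgroup G) := by
    intro x hx
    obtain ⟨y, hy, rfl⟩ := hx
    have hyR : y ∈ (R : Subgroup G) := hR hy
    have h1 : (MulAut.conj g) • y ∈ (MulAut.conj g) • (R : Subgroup G) :=
      Subgroup.smul_mem_pointwise_smul y (MulAut.conj g) _ hyR
    rw [← Sylow.coe_subgroup_smul, hg] at h1
    exact h1
  have hQ''N : Q'' ≤ N := by
    intro x hx
    obtain ⟨y, hy, rfl⟩ := hx
    exact hN.1.conj_mem y (hQ'N hy) g
  have hQ''card : Nat.card Q' = Nat.card Q'' :=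
    Nat.card_congr (Subgroup.equivMapOfInjective _ _ (MulAut.conj g).injective).toEquiv
  have hQ''dvd : p ^ av ∣ Nat.card Q'' := by
    rw [← hQ''card, ← hQ'card]; exact hQdvd
  obtain ⟨H₁, hH₁le, hH₁card⟩ :=
    Sylow.exists_subgroup_le_card_pow_prime_of_le_card hp P.2
      (H := Q''.subgroupOf (P : Subgroup G))
      (by
        rw [Nat.card_congr (Subgroup.subgroupOfEquivOfLe hQ''P).toEquiv]
        exact Nat.le_of_dvd Nat.card_pos hQ''dvd)
  set H : Subgroup G := H₁.map (P : Subgroup G).subtype with hHdef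
  have hHP : H ≤ (P : Subgroup G) := Subgroup.map_subtype_le _
  have hHN : H ≤ N := by
    calc H ≤ (Q''.subgroupOf (P : Subgroup G)).map (P : Subgroup G).subtype :=
        Subgroup.map_mono hH₁le
    _ = Q'' ⊓ (P : Subgroup G) := Subgroup.subgroupOf_map_subtype _ _
    _ ≤ N := inf_le_left.trans hQ''N
  have hHcard : Nat.card H = d := by
    rw [hHdef, ← Nat.card_congr
      (Subgroup.equivMapOfInjective _ _ (P : Subgroup G).subtype_injective).toEquiv,
      hH₁card, hd]
  -- Step 1 : the index of the normalizer of H is a power of p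
  have hkeyH := key_lemma hp hN hHN (a := av) (hd ▸ hHcard) (hPi H hHP hHcard)
  -- Step 2 : N ≤ P
  have hdecomp := exists_mul_decomp P hkeyH
  have hconj : ∀ g₀ : G, ∀ x ∈ H, g₀ * x * g₀⁻¹ ∈ (P : Subgroup G) ⊓ N := by
    intro g₀ x hx
    obtain ⟨u, hu, m, hm, rfl⟩ := hdecomp g₀
    constructor
    · have h1 : m * x * m⁻¹ ∈ H := (Subgroup.mem_normalizer_iff.mp hm x).mp hx
      have h2 : u * (m * x * m⁻¹) * u⁻¹ ∈ (P : Subgroup G) :=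
        (P : Subgroup G).mul_mem ((P : Subgroup G).mul_mem hu (hHP h1))
          ((P : Subgroup G).inv_mem hu)
      have he : (u * m) * x * (u * m)⁻¹ = u * (m * x * m⁻¹) * u⁻¹ := by group
      rwa [he]
    · exact hN.1.conj_mem x (hHN hx) _
  have hclos : Subgroup.normalClosure (H : Set G) ≤ (P : Subgroup G) ⊓ N := by
    apply (Subgroup.closure_le _).mpr
    intro x hx
    obtain ⟨y, hy, hc⟩ := Group.mem_conjugatesOfSet_iff.mp hx
    obtain ⟨c, hc2⟩ := isConj_iff.mp hc
    rw [← hc2]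
    exact hconj c y hy
  have hHbot : H ≠ ⊥ := by
    intro h
    rw [h, Subgroup.card_bot] at hHcard
    omega
  have hclosN : Subgroup.normalClosure (H : Set G) = N := by
    rcases hN.2.2 _ Subgroup.normalClosure_normal (hclos.trans inf_le_right) with h | h
    · exact absurd (le_bot_iff.mp (h ▸ Subgroup.subset_normalClosure (s := (H : Set G)))) hHbot
    · exact h
  have hNP : N ≤ (P : Subgroup G) := by
    rw [← hclosN]
    exact hclos.trans inf_le_left
  have hNpgrp : IsPGroup p ↥N := IsPGroup.to_le P.2 hNP
  have helem : IsElemAbelian p N := minNormal_elemAbelian hN hNpgrp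
  -- Step 3 : a P-invariant subgroup of N of order d
  have hNsubn : (N.subgroupOf (P : Subgroup G)).Normal := Subgroup.Normal.subgroupOf hN.1 _
  have hcardsub : Nat.card (N.subgroupOf (P : Subgroup G)) = Nat.card N :=
    Nat.card_congr (Subgroup.subgroupOfEquivOfLe hNP).toEquiv
  obtain ⟨H₀, hH₀n, hH₀le, hH₀card⟩ :=
    exists_normal_le_card_pow av P.2 (N.subgroupOf (P : Subgroup G)) hNsubn
      (by rw [hcardsub, ← hd]; exact hdvd)
  set H₀' : Subgroup G := H₀.map (P : Subgroup G).subtype with hH₀'def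
  have hH₀'N : H₀' ≤ N := by
    calc H₀' ≤ (N.subgroupOf (P : Subgroup G)).map (P : Subgroup G).subtype :=
        Subgroup.map_mono hH₀le
    _ = N ⊓ (P : Subgroup G) := Subgroup.subgroupOf_map_subtype _ _
    _ ≤ N := inf_le_left
  have hH₀'P : H₀' ≤ (P : Subgroup G) := Subgroup.map_subtype_le _
  have hH₀'card : Nat.card H₀' = d := by
    rw [hH₀'def, ← Nat.card_congr
      (Subgroup.equivMapOfInjective _ _ (P : Subgroup G).subtype_injective).toEquiv,
      hH₀card, hd]
  have hPnorm : (P : Subgroup G) ≤ (Subgroup.normalizer (H₀' : Set G)) := by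
    intro x hxP
    rw [Subgroup.mem_normalizer_iff]
    intro h
    constructor
    · intro hh
      obtain ⟨y, hy, rfl⟩ := hh
      refine ⟨(⟨x, hxP⟩ : ↥(P : Subgroup G)) * y * (⟨x, hxP⟩ : ↥(P : Subgroup G))⁻¹,
        hH₀n.conj_mem y hy ⟨x, hxP⟩, by simp⟩
    · intro hh
      obtain ⟨y, hy, hyeq⟩ := hh
      refine ⟨(⟨x, hxP⟩ : ↥(P : Subgroup G))⁻¹ * y * ((⟨x, hxP⟩ : ↥(P : Subgroup G))⁻¹)⁻¹,
        hH₀n.conj_mem y hy (⟨x, hxP⟩ : ↥(P : Subgroup G))⁻¹, ?_⟩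
      have hyval : (y : G) = x * h * x⁻¹ := hyeq
      show (x⁻¹ * (y : G) * x⁻¹⁻¹) = h
      rw [hyval]
      group
  have hkey₀ := key_lemma hp hN hH₀'N (a := av) (hd ▸ hH₀'card) (hPi H₀' hH₀'P hH₀'card)
  have hidx : (Subgroup.normalizer (H₀' : Set G)).index = 1 := by
    by_contra h
    obtain ⟨q, hq, hqdvd⟩ := Nat.exists_prime_and_dvd h
    have hqp : q = p := hkey₀ q hq hqdvd
    have hdvdP : (Subgroup.normalizer (H₀' : Set G)).index ∣ (P : Subgroup G).index :=
      Subgroup.index_dvd_of_le hPnorm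
    subst hqp
    exact P.not_dvd_index (hqdvd.trans hdvdP)
  have hH₀'normal : H₀'.Normal :=
    Subgroup.normalizer_eq_top_iff.mp (Subgroup.index_eq_one.mp hidx)
  have hH₀'bot : H₀' ≠ ⊥ := by
    intro h
    rw [h, Subgroup.card_bot] at hH₀'card
    omega
  have hfin : H₀' = N := (hN.2.2 _ hH₀'normal hH₀'N).resolve_left hH₀'bot
  exact ⟨helem, by rw [← hfin, hH₀'card]⟩
end

section
/- Let G be a finite group with a normal Sylow p-subgroup P, and let H be a 2-maximal subgroup of P (i.e., a maximal subgroup of a maximal subgroup of P). If H satisfies the partial Π-property in G, then H is a partial CAP-subgroup of G, that is, there exists a chief series of G each of whose chief factors is covered or avoided by H. -/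
variable {G : Type*} [Group G]

open scoped commutatorElement

section AuxStatement8

variable {G : Type*} [Group G]

/-- Commutator with a join with a normal subgroup. -/
lemma aux8_commutator_sup_le (P X A : Subgroup G) [hA : A.Normal] :
    ⁅P, X ⊔ A⁆ ≤ ⁅P, X⁆ ⊔ A := by
  rw [Subgroup.commutator_le]
  intro g hg y hy
  rw [← SetLike.mem_coe, Subgroup.mul_normal, Set.mem_mul] at hy
  obtain ⟨x, hx, a, ha, rfl⟩ := hy
  have key : ⁅g, x * a⁆ = ⁅g, x⁆ * (x * ⁅g, a⁆ * x⁻¹) := by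
    simp only [commutatorElement_def]; group
  rw [key]
  have haA : ⁅g, a⁆ ∈ A := by
    have := hA.conj_mem a ha g
    simpa [commutatorElement_def, mul_assoc] using mul_mem this (inv_mem ha)
  exact mul_mem (Subgroup.mem_sup_left (Subgroup.commutator_mem_commutator hg hx))
    (Subgroup.mem_sup_right (hA.conj_mem _ haA x))

/-- If `P` is a normal finite `p`-subgroup and `B ≤ ⁅P, B⁆ ⊔ A` with `A` normal,
then `B ≤ A`.  (Nilpotency of `P` forces the iterated commutators to vanish.) -/
lemma aux8_le_of_le_commutator_sup [Finite G] {p : ℕ} (hp : p.Prime)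
    {P B A : Subgroup G} [hPn : P.Normal] [hA : A.Normal]
    (hPp : IsPGroup p P) (hB : B ≤ ⁅P, B⁆ ⊔ A) : B ≤ A := by
  haveI : Fact p.Prime := ⟨hp⟩
  -- iterated commutators
  let E : ℕ → Subgroup G := fun n => Nat.rec B (fun _ En => ⁅P, En⁆) n
  have hE0 : E 0 = B := rfl
  have hEsucc : ∀ n, E (n + 1) = ⁅P, E n⁆ := fun n => rfl
  -- B stays below E n ⊔ A
  have claim1 : ∀ n, B ≤ E n ⊔ A := by
    intro n
    induction n with
    | zero => exact le_sup_left
    | succ n ih =>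
      refine hB.trans ?_
      have h1 : ⁅P, B⁆ ≤ ⁅P, E n ⊔ A⁆ := Subgroup.commutator_mono le_rfl ih
      have h2 : ⁅P, E n ⊔ A⁆ ≤ ⁅P, E n⁆ ⊔ A := aux8_commutator_sup_le P (E n) A
      rw [hEsucc]
      exact sup_le ((h1.trans h2)) le_sup_right
  -- E (n+1) lies in the image of the lower central series of P
  have claim2 : ∀ n, E (n + 1) ≤ (Subgroup.lowerCentralSeries (⊤ : Subgroup P) n).map P.subtype := by
    intro n
    induction n with
    | zero =>
      rw [hEsucc, hE0]
      have : (Subgroup.lowerCentralSeries (⊤ : Subgroup P) 0).map P.subtype = P := by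
        rw [lowerCentralSeries_zero, ← MonoidHom.range_eq_map, Subgroup.range_subtype]
      rw [this]
      exact Subgroup.commutator_le_left P B
    | succ n ih =>
      have hP : P = (⊤ : Subgroup P).map P.subtype := by
        rw [← MonoidHom.range_eq_map, Subgroup.range_subtype]
      show ⁅P, E (n + 1)⁆ ≤ _
      calc ⁅P, E (n + 1)⁆ ≤ ⁅(⊤ : Subgroup P).map P.subtype,
            (Subgroup.lowerCentralSeries (⊤ : Subgroup P) n).map P.subtype⁆ := by
            rw [← hP]; exact Subgroup.commutator_mono le_rfl ih
        _ = ⁅(Subgroup.lowerCentralSeries (⊤ : Subgroup P) n).map P.subtype, (⊤ : Subgroup P).map P.subtype⁆ :=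
            Subgroup.commutator_comm _ _
        _ = (Subgroup.lowerCentralSeries (⊤ : Subgroup P) (n + 1)).map P.subtype := by
            rw [show Subgroup.lowerCentralSeries (⊤ : Subgroup P) (n + 1) = ⁅Subgroup.lowerCentralSeries (⊤ : Subgroup P) n, ⊤⁆ from rfl,
              Subgroup.map_commutator]
  -- nilpotency of P
  haveI : Group.IsNilpotent P := hPp.isNilpotent
  obtain ⟨n, hn⟩ := nilpotent_iff_lowerCentralSeries.mp this
  have hEbot : E (n + 1) = ⊥ := by
    have h := claim2 n
    rw [hn] at h
    simpa using le_bot_iff.mp (h.trans (by simp))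
  have h := claim1 (n + 1)
  rw [hEbot, bot_sup_eq] at h
  exact h

end AuxStatement8

theorem statement_8 {G : Type*} [Group G] [Finite G] {p : ℕ} (hp : p.Prime)
    (P : Sylow p G) (hPn : (P : Subgroup G).Normal)
    (H : Subgroup G) (hH2 : Is2MaximalIn H (P : Subgroup G))
    (hPi : PartialPi H) :
    ∃ C : ChiefSeries G, ∀ i : Fin C.n,
      C.s i.succ ≤ H ⊔ C.s i.castSucc ∨ H ⊓ C.s i.succ ≤ C.s i.castSucc := by
  classical
  haveI : Fact p.Prime := ⟨hp⟩
  haveI := hPn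
  obtain ⟨M, hHM, hMP⟩ := hH2
  have hHP : H ≤ (P : Subgroup G) := hHM.1.le.trans hMP.1.le
  obtain ⟨C, hC⟩ := hPi
  refine ⟨C, fun i => ?_⟩
  set A := C.s i.castSucc with hAdef
  set B := C.s i.succ with hBdef
  haveI hAn : A.Normal := C.normal _
  haveI hBn : B.Normal := C.normal _
  have hABlt : A < B := C.strict i
  have hAB : A ≤ B := hABlt.le
  -- Step 1 : `⁅P, B⁆ ≤ A`, i.e. `P` centralizes the chief factor `B/A`.
  have hcomm : ⁅(P : Subgroup G), B⁆ ≤ A := by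
    have hle1 : A ≤ ⁅(P : Subgroup G), B⁆ ⊔ A := le_sup_right
    have hle2 : ⁅(P : Subgroup G), B⁆ ⊔ A ≤ B :=
      sup_le (Subgroup.commutator_le_right _ _) hAB
    rcases C.chief i (⁅(P : Subgroup G), B⁆ ⊔ A) inferInstance hle1 hle2 with h | h
    · exact le_sup_left.trans h.le
    · exfalso
      have hBle : B ≤ ⁅(P : Subgroup G), B⁆ ⊔ A := h.ge
      exact hABlt.not_ge (aux8_le_of_le_commutator_sup hp P.isPGroup' hBle)
  by_cases hav : H ⊓ B ≤ A
  · exact Or.inr hav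
  refine Or.inl ?_
  by_contra hcov
  exfalso
  set L := (H ⊔ A) ⊓ B with hLdef
  have hAL : A ≤ L := le_inf le_sup_right hAB
  have hLB : L ≤ B := inf_le_right
  have hHBL : H ⊓ B ≤ L := inf_le_inf (le_sup_left) le_rfl
  have hLneA : L ≠ A := fun h => hav (h ▸ hHBL)
  have hLneB : L ≠ B := fun h => hcov (h ▸ (inf_le_left : L ≤ H ⊔ A))
  -- Step 2 : `B = (P ⊓ B) ⊔ A`, so `B/A` is a `p`-group.
  have hPB : ((P : Subgroup G) ⊓ B) ⊔ A = B := by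
    have hle1 : A ≤ ((P : Subgroup G) ⊓ B) ⊔ A := le_sup_right
    have hle2 : ((P : Subgroup G) ⊓ B) ⊔ A ≤ B := sup_le inf_le_right hAB
    rcases C.chief i (((P : Subgroup G) ⊓ B) ⊔ A) inferInstance hle1 hle2 with h | h
    · exfalso
      exact hav (((inf_le_inf hHP le_rfl).trans le_sup_left).trans h.le)
    · exact h
  -- `B / A` is a p-group
  haveI : (A.subgroupOf B).Normal := hAn.subgroupOf B
  have hQ : IsPGroup p (B ⧸ A.subgroupOf B) := by
    intro g
    obtain ⟨b, rfl⟩ := QuotientGroup.mk'_surjective (A.subgroupOf B) g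
    have hb : (b : G) ∈ ((P : Subgroup G) ⊓ B) ⊔ A := hPB.symm ▸ b.2
    rw [← SetLike.mem_coe, Subgroup.mul_normal, Set.mem_mul] at hb
    obtain ⟨x, hx, a, ha, hxa⟩ := hb
    have hxP : x ∈ (P : Subgroup G) := hx.1
    have hxB : x ∈ B := hx.2
    obtain ⟨k, hk⟩ := P.isPGroup' ⟨x, hxP⟩
    refine ⟨k, ?_⟩
    have hbx : QuotientGroup.mk' (A.subgroupOf B) b
        = QuotientGroup.mk' (A.subgroupOf B) ⟨x, hxB⟩ := by
      refine (QuotientGroup.eq.mpr ?_).symm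
      have hb' : (b : G) = x * a := hxa.symm
      show ((⟨x, hxB⟩ : B)⁻¹ * b : B) ∈ A.subgroupOf B
      rw [Subgroup.mem_subgroupOf]
      show x⁻¹ * (b : G) ∈ A
      rw [hb', ← mul_assoc, inv_mul_cancel, one_mul]
      exact ha
    rw [hbx, ← map_pow]
    have hxpow : ((⟨x, hxB⟩ : B) ^ p ^ k : B) = 1 := by
      ext
      have : (x : G) ^ p ^ k = 1 := by
        have := congrArg (Subtype.val) hk
        simpa using this
      simpa using this
    rw [hxpow, map_one]
  obtain ⟨n, hn⟩ := IsPGroup.iff_card.mp hQ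
  -- card computations
  have hcardA_pos : 0 < Nat.card A := Nat.card_pos
  obtain ⟨m, hm⟩ : Nat.card A ∣ Nat.card L := Subgroup.card_dvd_of_le hAL
  have hLA : Nat.card L / Nat.card A = m := by
    rw [hm, Nat.mul_div_cancel_left _ hcardA_pos]
  have hBQ : Nat.card B = Nat.card (B ⧸ A.subgroupOf B) * Nat.card A := by
    rw [Subgroup.card_eq_card_quotient_mul_card_subgroup (A.subgroupOf B)]
    congr 1
    exact Nat.card_congr (Subgroup.subgroupOfEquivOfLe hAB).toEquiv
  have hmdvd : m ∣ p ^ n := by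
    have h2 : Nat.card L ∣ Nat.card B := Subgroup.card_dvd_of_le hLB
    rw [hm, hBQ, hn, mul_comm (p ^ n) (Nat.card A)] at h2
    exact (mul_dvd_mul_iff_left hcardA_pos.ne').mp h2
  -- Step 3 : the partial Π-property forces `(Subgroup.normalizer (L : Set G)) ⊔ P = ⊤`.
  have hNP : (Subgroup.normalizer (L : Set G)) ⊔ (P : Subgroup G) = ⊤ := by
    rw [← Subgroup.index_eq_one]
    by_contra hne
    have hne0 : ((Subgroup.normalizer (L : Set G)) ⊔ (P : Subgroup G)).index ≠ 0 :=
      Subgroup.index_ne_zero_of_finite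
    obtain ⟨q, hq, hqdvd⟩ := Nat.exists_prime_and_dvd hne
    -- q divides the index of the normalizer of L
    have hq1 : q ∣ (Subgroup.normalizer (L : Set G)).index :=
      hqdvd.trans (Subgroup.index_dvd_of_le le_sup_left)
    have hq2 : q ∣ (P : Subgroup G).index :=
      hqdvd.trans (Subgroup.index_dvd_of_le le_sup_right)
    have hqL := hC i q hq hq1
    rw [hLA] at hqL
    have hqp : q = p := by
      have : q ∣ p ^ n := hqL.trans hmdvd
      exact (Nat.prime_dvd_prime_iff_eq hq hp).mp (hq.dvd_of_dvd_pow this)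
    rw [hqp] at hq2
    exact P.not_dvd_index hq2
  -- Step 4 : `P` normalizes `L` since `⁅P, B⁆ ≤ A ≤ L`.
  have hPnorm : (P : Subgroup G) ≤ (Subgroup.normalizer (L : Set G)) := by
    intro x hx
    rw [Subgroup.mem_normalizer_iff]
    have key : ∀ y ∈ (P : Subgroup G), ∀ g ∈ L, y * g * y⁻¹ ∈ L := by
      intro y hy g hg
      have hcg : ⁅y, g⁆ ∈ A := hcomm (Subgroup.commutator_mem_commutator hy (hLB hg))
      have : y * g * y⁻¹ = ⁅y, g⁆ * g := by
        simp only [commutatorElement_def]; group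
      rw [this]
      exact mul_mem (hAL hcg) hg
    intro g
    constructor
    · intro hg; exact key x hx g hg
    · intro hg
      have := key x⁻¹ (inv_mem hx) _ hg
      simpa [mul_assoc] using this
  have hLnormal : L.Normal := by
    rw [← Subgroup.normalizer_eq_top_iff]
    rw [eq_top_iff, ← hNP]
    exact sup_le le_rfl hPnorm
  -- Step 5 : chiefness gives the contradiction.
  rcases C.chief i L hLnormal hAL hLB with h | h
  · exact hLneA h
  · exact hLneB h
end

section
/- Let G be a finite group with an elementary abelian normal Sylow p-subgroup P, and let H be a subgroup of P. Then H satisfies the partial Π-property in G if and only if H is complemented in G (i.e., there exists a subgroup K of G with G = HK and H ∩ K = 1). -/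
variable {G : Type*} [Group G]

section AuxiliaryLemmas

variable {G : Type*} [Group G]

theorem mem_sup_comm'' {A B : Subgroup G}
    (hcomm : ∀ a ∈ A, ∀ b ∈ B, a * b = b * a) {x : G} :
    x ∈ A ⊔ B ↔ ∃ a ∈ A, ∃ b ∈ B, a * b = x := by
  constructor
  · intro hx
    let S : Subgroup G :=
      { carrier := {x | ∃ a ∈ A, ∃ b ∈ B, a * b = x}
        one_mem' := ⟨1, one_mem _, 1, one_mem _, one_mul 1⟩
        mul_mem' := by
          rintro x y ⟨a, ha, b, hb, rfl⟩ ⟨c, hc, d, hd, rfl⟩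
          refine ⟨a * c, mul_mem ha hc, b * d, mul_mem hb hd, ?_⟩
          have h1 : b * c = c * b := (hcomm c hc b hb).symm
          calc a * c * (b * d) = a * (c * b) * d := by group
            _ = a * (b * c) * d := by rw [h1]
            _ = a * b * (c * d) := by group
        inv_mem' := by
          rintro x ⟨a, ha, b, hb, rfl⟩
          exact ⟨a⁻¹, inv_mem ha, b⁻¹, inv_mem hb, by
            rw [mul_inv_rev, hcomm a⁻¹ (inv_mem ha) b⁻¹ (inv_mem hb)]⟩ }
    have hA : A ≤ S := fun a ha => ⟨a, ha, 1, one_mem _, mul_one a⟩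
    have hB : B ≤ S := fun b hb => ⟨1, one_mem _, b, hb, one_mul b⟩
    exact sup_le hA hB hx
  · rintro ⟨a, ha, b, hb, rfl⟩
    exact mul_mem (Subgroup.mem_sup_left ha) (Subgroup.mem_sup_right hb)

theorem exists_min_normal_between [Finite G] {S T : Subgroup G} (hT : T.Normal) (hST : S < T) :
    ∃ N : Subgroup G, N.Normal ∧ S < N ∧ N ≤ T ∧
      ∀ X : Subgroup G, X.Normal → S ≤ X → X ≤ N → X = S ∨ X = N := by
  classical
  set 𝒮 : Set (Subgroup G) := {N | N.Normal ∧ S < N ∧ N ≤ T} with h𝒮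
  have hfin : 𝒮.Finite := Set.toFinite _
  have hne : 𝒮.Nonempty := ⟨T, hT, hST, le_rfl⟩
  obtain ⟨N, hN, hmin⟩ := Set.Finite.exists_minimalFor id 𝒮 hfin hne
  refine ⟨N, hN.1, hN.2.1, hN.2.2, fun X hX hSX hXN => ?_⟩
  by_cases hXS : X = S
  · exact Or.inl hXS
  · right
    have hXmem : X ∈ 𝒮 := ⟨hX, lt_of_le_of_ne hSX (Ne.symm hXS), hXN.trans hN.2.2⟩
    exact le_antisymm hXN (hmin hXmem hXN)

theorem subgroup_card_lt_of_lt [Finite G] {S N : Subgroup G} (h : S < N) :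
    Nat.card S < Nat.card N := by
  have e1 : Nat.card S = (S : Set G).ncard := Nat.card_coe_set_eq _
  have e2 : Nat.card N = (N : Set G).ncard := Nat.card_coe_set_eq _
  rw [e1, e2]
  exact Set.ncard_lt_ncard (SetLike.coe_ssubset_coe.mpr h) (Set.toFinite _)

end AuxiliaryLemmas

theorem plain_complement [Finite G] {p : ℕ} (hp : p.Prime) {P W K : Subgroup G}
    (hcomm : ∀ x ∈ P, ∀ y ∈ P, x * y = y * x) (hexp : ∀ x ∈ P, x ^ p = 1)
    (hWK : W ≤ K) (hKP : K ≤ P) :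
    ∃ C : Subgroup G, C ≤ K ∧ W ⊓ C = ⊥ ∧ W ⊔ C = K := by
  classical
  set 𝒮 : Set (Subgroup G) := {C | C ≤ K ∧ W ⊓ C = ⊥} with h𝒮
  have hfin : 𝒮.Finite := Set.toFinite _
  have hne : 𝒮.Nonempty := ⟨⊥, bot_le, inf_bot_eq W⟩
  obtain ⟨C₀, hC₀, hmax⟩ := Set.Finite.exists_maximalFor id 𝒮 hfin hne
  refine ⟨C₀, hC₀.1, hC₀.2, ?_⟩
  have hle : W ⊔ C₀ ≤ K := sup_le hWK hC₀.1
  by_contra hne2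
  have : ¬ K ≤ W ⊔ C₀ := fun h => hne2 (le_antisymm hle h)
  obtain ⟨x, hxK, hx2⟩ := SetLike.not_le_iff_exists.mp this
  have hxP : x ∈ P := hKP hxK
  set C₁ : Subgroup G := C₀ ⊔ Subgroup.zpowers x with hC₁def
  have hC₁K : C₁ ≤ K := sup_le hC₀.1 (by
    rintro y hy
    obtain ⟨n, rfl⟩ := Subgroup.mem_zpowers_iff.mp hy
    exact zpow_mem hxK n)
  have hWC₁ : W ⊓ C₁ ≠ ⊥ := by
    intro hbot
    have hC₁mem : C₁ ∈ 𝒮 := ⟨hC₁K, hbot⟩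
    have : C₀ = C₁ := le_antisymm le_sup_left (hmax hC₁mem le_sup_left)
    exact hx2 (Subgroup.mem_sup_right (this ▸ Subgroup.mem_sup_right (Subgroup.mem_zpowers x)))
  obtain ⟨w, hwmem, hw1⟩ : ∃ w, w ∈ W ⊓ C₁ ∧ w ≠ 1 := by
    by_contra h
    push_neg at h
    exact hWC₁ (Subgroup.eq_bot_iff_forall _ |>.mpr h)
  have hwW : w ∈ W := hwmem.1
  have hwC₁ : w ∈ C₁ := hwmem.2
  have hcomm' : ∀ a ∈ C₀, ∀ b ∈ Subgroup.zpowers x, a * b = b * a := by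
    intro a ha b hb
    obtain ⟨n, rfl⟩ := Subgroup.mem_zpowers_iff.mp hb
    exact hcomm a (hKP (hC₀.1 ha)) _ (zpow_mem hxP n)
  obtain ⟨c, hc, b, hb, hcb⟩ := (mem_sup_comm'' hcomm').mp hwC₁
  obtain ⟨n, rfl⟩ := Subgroup.mem_zpowers_iff.mp hb
  -- x ^ n ∈ W ⊔ C₀
  have hxn : x ^ n ∈ W ⊔ C₀ := by
    have : x ^ n = c⁻¹ * w := by rw [← hcb]; group
    rw [this]
    exact mul_mem (Subgroup.mem_sup_right (inv_mem hc)) (Subgroup.mem_sup_left hwW)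
  have hxp : x ^ (p : ℤ) = 1 := by
    rw [zpow_natCast]; exact hexp x hxP
  by_cases hpn : (p : ℤ) ∣ n
  · obtain ⟨s, rfl⟩ := hpn
    have : x ^ ((p : ℤ) * s) = 1 := by rw [zpow_mul, hxp, one_zpow]
    rw [this, mul_one] at hcb
    subst hcb
    have : c ∈ W ⊓ C₀ := ⟨hwW, hc⟩
    rw [hC₀.2, Subgroup.mem_bot] at this
    exact hw1 this
  · -- gcd(n, p) = 1, Bezout
    have hpZ : Prime (p : ℤ) := Int.prime_iff_natAbs_prime.mpr (by simpa using hp)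
    have hcop : IsCoprime (n : ℤ) (p : ℤ) := ((hpZ.coprime_iff_not_dvd).mpr hpn).symm
    obtain ⟨a, b', hab⟩ := hcop
    have hx' : x = (x ^ n) ^ a * (x ^ (p : ℤ)) ^ b' := by
      rw [← zpow_mul, ← zpow_mul, ← zpow_add, mul_comm n a, mul_comm (p : ℤ) b', hab, zpow_one]
    rw [hxp, one_zpow, mul_one] at hx'
    exact hx2 (hx' ▸ zpow_mem hxn a)

theorem maschke_complement {G : Type*} [Group G] [Finite G] {p : ℕ} (hp : p.Prime)
    {P : Subgroup G} (hcomm : ∀ x ∈ P, ∀ y ∈ P, x * y = y * x) (hexp : ∀ x ∈ P, x ^ p = 1)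
    {Q : Subgroup G} (hQc : Subgroup.IsComplement' P Q) (hpQ : ¬ p ∣ Nat.card Q)
    {W K : Subgroup G} (hWn : W.Normal) (hKn : K.Normal) (hWK : W ≤ K) (hKP : K ≤ P) :
    ∃ C : Subgroup G, C.Normal ∧ C ≤ K ∧ W ⊓ C = ⊥ ∧ W ⊔ C = K := by
  classical
  obtain ⟨C₀, hC₀K, hWC₀, hsup⟩ := plain_complement hp hcomm hexp hWK hKP
  have hWP : W ≤ P := hWK.trans hKP
  -- the projection π onto the W-part
  set π : G → G := fun x =>
    if h : ∃ wc : W × C₀, (wc.1 : G) * (wc.2 : G) = x then ((h.choose.1 : W) : G) else 1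
    with hπdef
  have hπW : ∀ x, π x ∈ W := by
    intro x
    by_cases h : ∃ wc : W × C₀, (wc.1 : G) * (wc.2 : G) = x
    · rw [hπdef]; simp only [dif_pos h]; exact (h.choose.1).2
    · rw [hπdef]; simp only [dif_neg h]; exact one_mem W
  have hπuniq : ∀ w c : G, w ∈ W → c ∈ C₀ → π (w * c) = w := by
    intro w c hw hc
    have h : ∃ wc : W × C₀, (wc.1 : G) * (wc.2 : G) = w * c := ⟨(⟨w, hw⟩, ⟨c, hc⟩), rfl⟩
    rw [hπdef]; simp only [dif_pos h]
    have spec := h.choose_spec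
    set w' := ((h.choose.1 : W) : G) with hw'
    set c' := ((h.choose.2 : C₀) : G) with hc'
    have hw'W : w' ∈ W := (h.choose.1).2
    have hc'C : c' ∈ C₀ := (h.choose.2).2
    have h1 : w⁻¹ * w' = c * c'⁻¹ := by
      have : w' * c' = w * c := spec
      calc w⁻¹ * w' = w⁻¹ * (w' * c') * c'⁻¹ := by group
        _ = w⁻¹ * (w * c) * c'⁻¹ := by rw [this]
        _ = c * c'⁻¹ := by group
    have h2 : w⁻¹ * w' ∈ W ⊓ C₀ := Subgroup.mem_inf.mpr
      ⟨mul_mem (inv_mem hw) hw'W, h1 ▸ mul_mem hc (inv_mem hc'C)⟩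
    rw [hWC₀, Subgroup.mem_bot] at h2
    have h3 : w' = w := by
      have h4 := congrArg (fun z => w * z) h2
      simpa [mul_assoc] using h4
    exact h3
  have hcommWC : ∀ a ∈ W, ∀ b ∈ C₀, a * b = b * a :=
    fun a ha b hb => hcomm a (hWP ha) b (hKP (hC₀K hb))
  have hπspec : ∀ x ∈ K, π x ∈ W ∧ (π x)⁻¹ * x ∈ C₀ := by
    intro x hx
    have hx' : x ∈ W ⊔ C₀ := by rw [hsup]; exact hx
    obtain ⟨w, hw, c, hc, rfl⟩ := (mem_sup_comm'' hcommWC).mp hx'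
    rw [hπuniq w c hw hc]
    exact ⟨hw, by rw [← mul_assoc, inv_mul_cancel, one_mul]; exact hc⟩
  have hπmul : ∀ x ∈ K, ∀ y ∈ K, π (x * y) = π x * π y := by
    intro x hx y hy
    obtain ⟨hxW, hxC⟩ := hπspec x hx
    obtain ⟨hyW, hyC⟩ := hπspec y hy
    have hc : ((π x)⁻¹ * x) * (π y) = (π y) * ((π x)⁻¹ * x) :=
      hcomm _ (hKP (hC₀K hxC)) _ (hWP (hπW y))
    have hxy : x * y = (π x * π y) * (((π x)⁻¹ * x) * ((π y)⁻¹ * y)) := by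
      calc x * y = π x * (((π x)⁻¹ * x) * π y) * ((π y)⁻¹ * y) := by group
        _ = π x * (π y * ((π x)⁻¹ * x)) * ((π y)⁻¹ * y) := by rw [hc]
        _ = (π x * π y) * (((π x)⁻¹ * x) * ((π y)⁻¹ * y)) := by group
    rw [hxy, hπuniq _ _ (mul_mem hxW hyW) (mul_mem hxC hyC)]
  have hπid : ∀ w ∈ W, π w = w := by
    intro w hw
    have := hπuniq w 1 hw (one_mem C₀)
    rwa [mul_one] at this
  -- choice of the inverse m of |Q| mod p
  haveI : Fact p.Prime := ⟨hp⟩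
  have hQ0 : ((Nat.card ↥Q : ℕ) : ZMod p) ≠ 0 := by
    rw [Ne, ZMod.natCast_eq_zero_iff]
    exact hpQ
  set m : ℕ := (((Nat.card ↥Q : ℕ) : ZMod p))⁻¹.val with hmdef
  have hm : (Nat.card ↥Q * m) % p = 1 % p := by
    have h1 : ((Nat.card ↥Q * m : ℕ) : ZMod p) = ((1 : ℕ) : ZMod p) := by
      push_cast
      rw [hmdef, ZMod.natCast_val, ZMod.cast_id, mul_inv_cancel₀ hQ0]
    exact (ZMod.natCast_eq_natCast_iff _ _ _).mp h1
  have hpow1 : ∀ y ∈ P, y ^ (Nat.card ↥Q * m) = y := by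
    intro y hy
    set t := Nat.card ↥Q * m with ht
    have h1 : t % p = 1 := by rw [hm, Nat.mod_eq_of_lt hp.one_lt]
    calc y ^ t = y ^ (p * (t / p) + t % p) := by rw [Nat.div_add_mod]
      _ = (y ^ p) ^ (t / p) * y ^ (t % p) := by rw [pow_add, pow_mul]
      _ = y := by rw [hexp y hy, one_pow, one_mul, h1, pow_one]
  -- the averaged projection
  letI instWC : CommGroup ↥W :=
    { (inferInstance : Group ↥W) with
      mul_comm := fun a b => Subtype.ext (hcomm a (hWP a.2) b (hWP b.2)) }
  haveI : Fintype ↥Q := Fintype.ofFinite _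
  set f : G → ↥Q → ↥W := fun x q =>
    ⟨(q : G) * π ((q : G)⁻¹ * x * (q : G)) * (q : G)⁻¹, hWn.conj_mem _ (hπW _) _⟩ with hfdef
  set Fs : G → ↥W := fun x => (∏ q : ↥Q, f x q) ^ m with hFsdef
  have coe_mulW : ∀ x y : ↥W, ((x * y : ↥W) : G) = (x : G) * (y : G) := fun _ _ => rfl
  have coe_powW : ∀ (a : ↥W) (n : ℕ), ((a ^ n : ↥W) : G) = (a : G) ^ n := by
    intro a n
    induction n with
    | zero => rfl
    | succ n ih => rw [pow_succ, pow_succ, coe_mulW, ih]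
  have hcardQ : (Finset.univ : Finset ↥Q).card = Nat.card ↥Q := by
    rw [Nat.card_eq_fintype_card, Finset.card_univ]
  have hfmul : ∀ x ∈ K, ∀ y ∈ K, ∀ q : ↥Q, f (x * y) q = f x q * f y q := by
    intro x hx y hy q
    apply Subtype.ext
    show (q : G) * π ((q:G)⁻¹ * (x * y) * q) * (q:G)⁻¹ =
      ((q:G) * π ((q:G)⁻¹ * x * q) * (q:G)⁻¹) * ((q:G) * π ((q:G)⁻¹ * y * q) * (q:G)⁻¹)
    have h1 : (q:G)⁻¹ * (x * y) * q = ((q:G)⁻¹ * x * q) * ((q:G)⁻¹ * y * q) := by group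
    have hxK : (q:G)⁻¹ * x * q ∈ K := by
      have := hKn.conj_mem x hx (q:G)⁻¹
      simpa using this
    have hyK : (q:G)⁻¹ * y * q ∈ K := by
      have := hKn.conj_mem y hy (q:G)⁻¹
      simpa using this
    rw [h1, hπmul _ hxK _ hyK]
    group
  have hFmul : ∀ x ∈ K, ∀ y ∈ K, Fs (x * y) = Fs x * Fs y := by
    intro x hx y hy
    have h1 : (∏ q : ↥Q, f (x * y) q) = (∏ q : ↥Q, f x q) * (∏ q : ↥Q, f y q) := by
      rw [← Finset.prod_mul_distrib]
      exact Finset.prod_congr rfl fun q _ => hfmul x hx y hy q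
    rw [hFsdef]
    simp only
    rw [h1, mul_pow]
  have hFid : ∀ w ∈ W, (Fs w : G) = w := by
    intro w hw
    have hfw : ∀ q : ↥Q, f w q = ⟨w, hw⟩ := by
      intro q
      apply Subtype.ext
      show (q : G) * π ((q:G)⁻¹ * w * q) * (q:G)⁻¹ = w
      have hmem : (q:G)⁻¹ * w * q ∈ W := by
        have := hWn.conj_mem w hw (q:G)⁻¹
        simpa using this
      rw [hπid _ hmem]
      group
    have h1 : Fs w = (⟨w, hw⟩ : ↥W) ^ (Nat.card ↥Q * m) := by
      rw [hFsdef]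
      simp only
      rw [Finset.prod_congr rfl fun q _ => hfw q, Finset.prod_const, hcardQ, ← pow_mul]
    rw [h1, coe_powW, hpow1 w (hWP hw)]
  have hFW : ∀ x : G, (Fs x : G) ∈ W := fun x => (Fs x).2
  -- equivariance under Q
  have hFequivQ : ∀ q₀ : ↥Q, ∀ x : G, (Fs ((q₀ : G) * x * (q₀ : G)⁻¹) : G) =
      (q₀ : G) * (Fs x : G) * (q₀ : G)⁻¹ := by
    intro q₀ x
    set cW : ↥W →* ↥W :=
      { toFun := fun w => ⟨(q₀ : G) * (w : G) * (q₀ : G)⁻¹, hWn.conj_mem _ w.2 _⟩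
        map_one' := by apply Subtype.ext; simp
        map_mul' := by
          intro a b
          apply Subtype.ext
          show (q₀:G) * ((a:G) * (b:G)) * (q₀:G)⁻¹ =
            ((q₀:G) * (a:G) * (q₀:G)⁻¹) * ((q₀:G) * (b:G) * (q₀:G)⁻¹)
          group } with hcWdef
    have hfq : ∀ q : ↥Q, f ((q₀ : G) * x * (q₀ : G)⁻¹) q = cW (f x (q₀⁻¹ * q)) := by
      intro q
      apply Subtype.ext
      show (q:G) * π ((q:G)⁻¹ * ((q₀:G) * x * (q₀:G)⁻¹) * (q:G)) * (q:G)⁻¹ =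
        (q₀:G) * (((q₀⁻¹ * q : ↥Q):G) * π (((q₀⁻¹ * q : ↥Q):G)⁻¹ * x * ((q₀⁻¹ * q : ↥Q):G)) *
          ((q₀⁻¹ * q : ↥Q):G)⁻¹) * (q₀:G)⁻¹
      have hcoe : ((q₀⁻¹ * q : ↥Q) : G) = (q₀:G)⁻¹ * (q:G) := rfl
      rw [hcoe]
      have harg : (q:G)⁻¹ * ((q₀:G) * x * (q₀:G)⁻¹) * (q:G) =
          ((q₀:G)⁻¹ * (q:G))⁻¹ * x * ((q₀:G)⁻¹ * (q:G)) := by group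
      rw [harg]
      group
    have h2 : (∏ q : ↥Q, f ((q₀:G) * x * (q₀:G)⁻¹) q) = cW (∏ q : ↥Q, f x q) := by
      rw [Finset.prod_congr rfl fun q _ => hfq q, ← map_prod]
      congr 1
      exact Fintype.prod_equiv (Equiv.mulLeft q₀⁻¹) _ _ (fun q => rfl)
    have h3 : Fs ((q₀:G) * x * (q₀:G)⁻¹) = cW (Fs x) := by
      rw [hFsdef]
      simp only
      rw [h2, ← map_pow]
    rw [h3]
    rfl
  -- equivariance under all of G
  have hFequiv : ∀ g : G, ∀ x ∈ K, (Fs (g * x * g⁻¹) : G) = g * (Fs x : G) * g⁻¹ := by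
    intro g x hx
    obtain ⟨⟨u, q₀⟩, hg⟩ := (hQc.existsUnique g).exists
    simp only at hg
    have hu : (u : G) ∈ P := u.2
    have hq₀x : (q₀:G) * x * (q₀:G)⁻¹ ∈ P := hKP (by
      have := hKn.conj_mem x hx (q₀:G); simpa using this)
    have h1 : g * x * g⁻¹ = (u:G) * ((q₀:G) * x * (q₀:G)⁻¹) * (u:G)⁻¹ := by
      rw [← hg]; group
    have h2 : (u:G) * ((q₀:G) * x * (q₀:G)⁻¹) * (u:G)⁻¹ = (q₀:G) * x * (q₀:G)⁻¹ := by
      rw [hcomm _ hu _ hq₀x]; group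
    rw [h1, h2, hFequivQ q₀ x, ← hg]
    have hconjP : (q₀:G) * (Fs x : G) * (q₀:G)⁻¹ ∈ P := hWP (hWn.conj_mem _ (hFW x) _)
    have hcu : (u:G) * ((q₀:G) * (Fs x : G) * (q₀:G)⁻¹) =
        ((q₀:G) * (Fs x : G) * (q₀:G)⁻¹) * (u:G) := hcomm _ u.2 _ hconjP
    calc (q₀:G) * (Fs x : G) * (q₀:G)⁻¹
        = ((u:G) * ((q₀:G) * (Fs x : G) * (q₀:G)⁻¹)) * (u:G)⁻¹ * 1 := by
          rw [hcu]; group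
      _ = ((u:G) * (q₀:G)) * (Fs x : G) * (((u:G)) * (q₀:G))⁻¹ := by group
  have hF1 : (Fs 1 : G) = 1 := hFid 1 (one_mem W)
  have hFinv : ∀ x ∈ K, (Fs x⁻¹ : G) = ((Fs x : G))⁻¹ := by
    intro x hx
    have h := hFmul x hx x⁻¹ (inv_mem hx)
    rw [mul_inv_cancel] at h
    have h2 := congrArg (fun z : ↥W => (z : G)) h
    simp only [coe_mulW] at h2
    rw [hF1] at h2
    have h3 := congrArg (fun z => ((Fs x : G))⁻¹ * z) h2
    simpa [mul_assoc] using h3.symm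
  -- the subgroup C = kernel of F on K
  set C : Subgroup G :=
    { carrier := {x : G | x ∈ K ∧ (Fs x : G) = 1}
      one_mem' := ⟨one_mem K, hF1⟩
      mul_mem' := by
        rintro x y ⟨hx, fx⟩ ⟨hy, fy⟩
        refine ⟨mul_mem hx hy, ?_⟩
        rw [hFmul x hx y hy, coe_mulW, fx, fy, one_mul]
      inv_mem' := by
        rintro x ⟨hx, fx⟩
        refine ⟨inv_mem hx, ?_⟩
        rw [hFinv x hx, fx, inv_one] } with hCdef
  have hmemC : ∀ x : G, x ∈ C ↔ x ∈ K ∧ (Fs x : G) = 1 := fun x => Iff.rfl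
  have hCK : C ≤ K := fun x hx => ((hmemC x).mp hx).1
  refine ⟨C, ⟨?_⟩, hCK, ?_, ?_⟩
  · intro x hx g
    obtain ⟨hxK, hfx⟩ := (hmemC x).mp hx
    refine (hmemC _).mpr ⟨hKn.conj_mem x hxK g, ?_⟩
    rw [hFequiv g x hxK, hfx]
    group
  · rw [Subgroup.eq_bot_iff_forall]
    intro x hx
    obtain ⟨hxW, hxC⟩ := Subgroup.mem_inf.mp hx
    obtain ⟨hxK, hfx⟩ := (hmemC x).mp hxC
    rw [hFid x hxW] at hfx
    exact hfx
  · refine le_antisymm (sup_le hWK hCK) ?_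
    intro x hx
    set a : G := (Fs x : G) with hadef
    have haW : a ∈ W := hFW x
    have haK : a ∈ K := hWK haW
    set b : G := a⁻¹ * x with hbdef
    have hbK : b ∈ K := mul_mem (inv_mem haK) hx
    have hfb : (Fs b : G) = 1 := by
      have h := hFmul a⁻¹ (inv_mem haK) x hx
      have h2 := congrArg (fun z : ↥W => (z : G)) h
      simp only [coe_mulW] at h2
      rw [← hbdef] at h2
      rw [h2, hFinv a haK, hFid a haW, ← hadef, inv_mul_cancel]
    have hxab : x = a * b := by rw [hbdef]; group
    rw [hxab]
    exact mul_mem (Subgroup.mem_sup_left haW) (Subgroup.mem_sup_right ((hmemC b).mpr ⟨hbK, hfb⟩))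

theorem chain_complement {G : Type*} [Group G] [Finite G] {p : ℕ} (hp : p.Prime)
    {P : Subgroup G} (hcomm : ∀ x ∈ P, ∀ y ∈ P, x * y = y * x) (hexp : ∀ x ∈ P, x ^ p = 1)
    {Q : Subgroup G} (hQc : Subgroup.IsComplement' P Q) (hpQ : ¬ p ∣ Nat.card Q)
    (W : ℕ → Subgroup G) (hW0 : W 0 = ⊥)
    (hmono : ∀ j, W j ≤ W (j + 1))
    (hWle : ∀ j, W j ≤ P) (hWn : ∀ j, (W j).Normal) :
    ∀ (m : ℕ) (H : Subgroup G), H ≤ W m →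
      (∀ j < m, ∀ X : Subgroup G, X.Normal → X ≤ P → W j ≤ X → X ≤ W (j + 1) →
        X = W j ∨ X = W (j + 1)) →
      (∀ j < m, ((H ⊔ W j) ⊓ W (j + 1)).Normal) →
      ∃ K : Subgroup G, K.Normal ∧ K ≤ W m ∧ H ⊓ K = ⊥ ∧ H ⊔ K = W m := by
  have hmono' : ∀ a b : ℕ, a ≤ b → W a ≤ W b := by
    intro a b hab
    induction b with
    | zero => rw [Nat.le_zero] at hab; subst hab; exact le_rfl
    | succ b ih =>
      rcases Nat.lt_or_ge a (b + 1) with h | h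
      · exact (ih (Nat.lt_succ_iff.mp h)).trans (hmono b)
      · have : a = b + 1 := le_antisymm hab h
        subst this; exact le_rfl
  intro m
  induction m with
  | zero =>
    intro H hH _ _
    rw [hW0] at hH ⊢
    rw [le_bot_iff] at hH
    exact ⟨⊥, (by infer_instance : (⊥ : Subgroup G).Normal), bot_le, by rw [hH, inf_bot_eq], by rw [hH, sup_bot_eq]⟩
  | succ m ih =>
    intro H hH hirr hU
    have hHP : H ≤ P := hH.trans (hWle (m + 1))
    set H' : Subgroup G := H ⊓ W m with hH'def
    have hH'H : H' ≤ H := inf_le_left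
    have hH'W : H' ≤ W m := inf_le_right
    -- transfer the hU hypothesis
    have hU' : ∀ j < m, ((H' ⊔ W j) ⊓ W (j + 1)).Normal := by
      intro j hj
      have heq : (H' ⊔ W j) ⊓ W (j + 1) = (H ⊔ W j) ⊓ W (j + 1) := by
        apply le_antisymm
        · exact inf_le_inf_right _ (sup_le_sup_right hH'H _)
        · intro x hx
          obtain ⟨hx1, hx2⟩ := Subgroup.mem_inf.mp hx
          have hcomm2 : ∀ a ∈ H, ∀ b ∈ W j, a * b = b * a :=
            fun a ha b hb => hcomm a (hHP ha) b (hWle j hb)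
          obtain ⟨h, hh, w, hw, rfl⟩ := (mem_sup_comm'' hcomm2).mp hx1
          have hhWm : h ∈ W m := by
            have hx2' : h * w ∈ W m := hmono' (j+1) m hj (by exact hx2)
            have hw' : w ∈ W m := hmono' j m (le_of_lt hj) hw
            have : h = (h * w) * w⁻¹ := by group
            rw [this]; exact mul_mem hx2' (inv_mem hw')
          exact Subgroup.mem_inf.mpr ⟨mul_mem
            (Subgroup.mem_sup_left (Subgroup.mem_inf.mpr ⟨hh, hhWm⟩))
            (Subgroup.mem_sup_right hw), hx2⟩
      rw [heq]
      exact hU j (Nat.lt_succ_of_lt hj)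
    obtain ⟨K', hK'n, hK'le, hK'disj, hK'sup⟩ := ih H' hH'W
      (fun j hj => hirr j (Nat.lt_succ_of_lt hj)) hU'
    -- the top factor
    set T : Subgroup G := (H ⊔ W m) ⊓ W (m + 1) with hTdef
    have hTn : T.Normal := hU m (Nat.lt_succ_self m)
    have hTeq : T = H ⊔ W m := inf_eq_left.mpr (sup_le hH (hmono m))
    have hTP : T ≤ P := by rw [hTeq]; exact sup_le hHP (hWle m)
    have hTcases : T = W m ∨ T = W (m + 1) :=
      hirr m (Nat.lt_succ_self m) T hTn hTP (by rw [hTeq]; exact le_sup_right) inf_le_right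
    rcases hTcases with hT | hT
    · -- H ≤ W m ; use Maschke to extend K' by a complement C of W m in W (m+1)
      have hHWm : H ≤ W m := by
        rw [← hT, hTeq]; exact le_sup_left
      have hH'eq : H' = H := by rw [hH'def, inf_eq_left.mpr hHWm]
      obtain ⟨C, hCn, hCle, hCdisj, hCsup⟩ := maschke_complement hp hcomm hexp hQc hpQ
        (hWn m) (hWn (m+1)) (hmono m) (hWle (m+1))
      refine ⟨K' ⊔ C, ?_, sup_le (hK'le.trans (hmono m)) hCle, ?_, ?_⟩
      · haveI := hK'n; haveI := hCn; exact Subgroup.sup_normal K' C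
      · rw [Subgroup.eq_bot_iff_forall]
        intro x hx
        obtain ⟨hxH, hxK⟩ := Subgroup.mem_inf.mp hx
        have hcomm3 : ∀ a ∈ K', ∀ b ∈ C, a * b = b * a :=
          fun a ha b hb => hcomm a (hWle m (hK'le ha)) b (hWle (m+1) (hCle hb))
        obtain ⟨k, hk, c, hc, rfl⟩ := (mem_sup_comm'' hcomm3).mp hxK
        have hcWm : c ∈ W m ⊓ C := by
          refine Subgroup.mem_inf.mpr ⟨?_, hc⟩
          have h1 : c = k⁻¹ * (k * c) := by group
          rw [h1]
          exact mul_mem (inv_mem (hK'le hk)) (hHWm hxH)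
        rw [hCdisj, Subgroup.mem_bot] at hcWm
        subst hcWm
        rw [mul_one] at hxH ⊢
        have : k ∈ H' ⊓ K' := Subgroup.mem_inf.mpr ⟨by rw [hH'eq]; exact hxH, hk⟩
        rw [hK'disj, Subgroup.mem_bot] at this
        exact this
      · calc H ⊔ (K' ⊔ C) = (H ⊔ K') ⊔ C := by rw [sup_assoc]
          _ = (H' ⊔ K') ⊔ C := by rw [hH'eq]
          _ = W m ⊔ C := by rw [hK'sup]
          _ = W (m + 1) := hCsup
    · -- T = W (m+1) : K' already works
      refine ⟨K', hK'n, hK'le.trans (hmono m), ?_, ?_⟩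
      · rw [Subgroup.eq_bot_iff_forall]
        intro x hx
        obtain ⟨hxH, hxK⟩ := Subgroup.mem_inf.mp hx
        have : x ∈ H' ⊓ K' := Subgroup.mem_inf.mpr
          ⟨Subgroup.mem_inf.mpr ⟨hxH, hK'le hxK⟩, hxK⟩
        rw [hK'disj, Subgroup.mem_bot] at this
        exact this
      · apply le_antisymm
        · exact sup_le hH (hK'le.trans (hmono m))
        · rw [← hT, hTeq]
          refine sup_le le_sup_left ?_
          rw [← hK'sup]
          exact sup_le (hH'H.trans le_sup_left) le_sup_right

theorem exists_partialPi_series [Finite G]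
    (A B : Subgroup G) (hA : A.Normal) (hB : B.Normal) (hAB : A ≤ B)
    (hBcomm : ∀ x ∈ B, ∀ y ∈ B, x * y = y * x)
    (H : Subgroup G) (hH : H ≤ B) (h1 : H ⊓ A = ⊥) (h2 : H ⊔ A = B) :
    PartialPi H := by
  classical
  -- target of the next step
  set tgt : Subgroup G → Subgroup G := fun S => if A ≤ S then (if B ≤ S then ⊤ else B) else A
    with htgt
  have htgtn : ∀ S, (tgt S).Normal := by
    intro S
    rw [htgt]
    dsimp only
    split_ifs
    · infer_instance
    · exact hB
    · exact hA
  -- invariant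
  set Inv : Subgroup G → Prop :=
    fun S => S.Normal ∧ (S ≤ A ∨ (A ≤ S ∧ S ≤ B) ∨ B ≤ S) with hInv
  have htgt_lt : ∀ S, Inv S → S ≠ ⊤ → S < tgt S := by
    intro S hS hSne
    rw [htgt]
    dsimp only
    split_ifs with ha hb
    · exact lt_top_iff_ne_top.mpr hSne
    · rcases hS.2 with h | h | h
      · exact lt_of_le_of_ne (h.trans hAB) (fun hSB => hb (hSB ▸ le_rfl))
      · exact lt_of_le_of_ne h.2 (fun hSB => hb (hSB ▸ le_rfl))
      · exact absurd h hb
    · rcases hS.2 with h | h | h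
      · exact lt_of_le_of_ne h (fun hSA => ha (hSA ▸ le_rfl))
      · exact absurd h.1 ha
      · exact absurd (hAB.trans h) ha
  set nxt : Subgroup G → Subgroup G := fun S =>
    if h : ∃ N : Subgroup G, N.Normal ∧ S < N ∧ N ≤ tgt S ∧
        ∀ X : Subgroup G, X.Normal → S ≤ X → X ≤ N → X = S ∨ X = N
    then h.choose else ⊤ with hnxt
  have hnxt_spec : ∀ S, Inv S → S ≠ ⊤ →
      (nxt S).Normal ∧ S < nxt S ∧ nxt S ≤ tgt S ∧
      (∀ X : Subgroup G, X.Normal → S ≤ X → X ≤ nxt S → X = S ∨ X = nxt S) := by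
    intro S hS hSne
    have hex : ∃ N : Subgroup G, N.Normal ∧ S < N ∧ N ≤ tgt S ∧
        ∀ X : Subgroup G, X.Normal → S ≤ X → X ≤ N → X = S ∨ X = N := by
      obtain ⟨N, hN1, hN2, hN3, hN4⟩ := exists_min_normal_between (htgtn S) (htgt_lt S hS hSne)
      exact ⟨N, hN1, hN2, hN3, hN4⟩
    rw [hnxt]
    dsimp only
    rw [dif_pos hex]
    exact hex.choose_spec
  have hnxt_inv : ∀ S, Inv S → S ≠ ⊤ → Inv (nxt S) := by
    intro S hS hSne
    obtain ⟨hn1, hn2, hn3, _⟩ := hnxt_spec S hS hSne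
    refine ⟨hn1, ?_⟩
    revert hn3
    rw [htgt]
    dsimp only
    split_ifs with ha hb
    · intro _
      right; right; exact hb.trans hn2.le
    · intro h3
      right; left; exact ⟨ha.trans hn2.le, h3⟩
    · intro h3
      left; exact h3
  -- the sequence
  set seq : ℕ → Subgroup G := fun k => Nat.rec ⊥ (fun _ S => if S = ⊤ then ⊤ else nxt S) k
    with hseq
  have hseq0 : seq 0 = ⊥ := rfl
  have hseqsucc : ∀ k, seq (k + 1) = if seq k = ⊤ then ⊤ else nxt (seq k) := fun k => rfl
  have hseqInv : ∀ k, Inv (seq k) := by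
    intro k
    induction k with
    | zero =>
      rw [hseq0]
      exact ⟨(by infer_instance : (⊥ : Subgroup G).Normal), Or.inl bot_le⟩
    | succ k ihk =>
      rw [hseqsucc]
      split_ifs with hk
      · exact ⟨(by infer_instance : (⊤ : Subgroup G).Normal), Or.inr (Or.inr le_top)⟩
      · exact hnxt_inv _ ihk hk
  have hgrow : ∀ k, seq k = ⊤ ∨ k + 1 ≤ Nat.card (seq k) := by
    intro k
    induction k with
    | zero =>
      right
      exact Nat.card_pos
    | succ k ihk =>
      rcases ihk with hk | hk
      · left; rw [hseqsucc, if_pos hk]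
      · by_cases hk2 : seq k = ⊤
        · left; rw [hseqsucc, if_pos hk2]
        · rcases Classical.em (seq (k+1) = ⊤) with h | h
          · exact Or.inl h
          · right
            rw [hseqsucc, if_neg hk2]
            have := subgroup_card_lt_of_lt (hnxt_spec _ (hseqInv k) hk2).2.1
            omega
  have hterm : ∃ k, seq k = ⊤ := by
    refine ⟨Nat.card G, ?_⟩
    rcases hgrow (Nat.card G) with h | h
    · exact h
    · exfalso
      have h2 : Nat.card (seq (Nat.card G)) ≤ Nat.card G :=
        Subgroup.card_le_card_group (seq (Nat.card G))
      omega
  set n : ℕ := Nat.find hterm with hn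
  have htop : seq n = ⊤ := Nat.find_spec hterm
  have hnottop : ∀ k < n, seq k ≠ ⊤ := fun k hk => Nat.find_min hterm hk
  have hstep : ∀ k < n, seq (k + 1) = nxt (seq k) := by
    intro k hk
    rw [hseqsucc, if_neg (hnottop k hk)]
  -- build the chief series
  set C : ChiefSeries G :=
    { n := n
      s := fun i => seq i.val
      bot_eq := hseq0
      top_eq := htop
      normal := fun i => (hseqInv i.val).1
      strict := by
        intro i
        have h := hnxt_spec (seq i.val) (hseqInv i.val) (hnottop i.val i.isLt)
        show seq i.val < seq (i.val + 1)
        rw [hstep i.val i.isLt]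
        exact h.2.1
      chief := by
        intro i N hN h1' h2'
        have h := hnxt_spec (seq i.val) (hseqInv i.val) (hnottop i.val i.isLt)
        have h1'' : seq i.val ≤ N := h1'
        have h2'' : N ≤ seq (i.val + 1) := h2'
        rw [hstep i.val i.isLt] at h2''
        rcases h.2.2.2 N hN h1'' h2'' with he | he
        · left; exact he
        · right; show N = seq (i.val + 1); rw [hstep i.val i.isLt]; exact he } with hC
  refine ⟨C, ?_⟩
  intro i q hq hdvd
  exfalso
  -- the subgroup L is normal, so its normalizer is ⊤ and has index 1
  have hLnormal : ((H ⊔ C.s i.castSucc) ⊓ C.s i.succ).Normal := by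
    have hCs1 : C.s i.castSucc = seq i.val := rfl
    have hCs2 : C.s i.succ = seq (i.val + 1) := rfl
    set S := seq i.val with hS
    set N := seq (i.val + 1) with hN
    have hSinv := hseqInv i.val
    have hspec := hnxt_spec S hSinv (hnottop i.val i.isLt)
    have hNval : N = nxt S := hstep i.val i.isLt
    have hNtgt : N ≤ tgt S := hNval ▸ hspec.2.2.1
    have hSN : S ≤ N := (hNval ▸ hspec.2.1).le
    rw [hCs1, hCs2]
    by_cases ha : A ≤ S
    · by_cases hb : B ≤ S
      · -- H ≤ B ≤ S
        have hHS : H ≤ S := hH.trans hb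
        have heq : (H ⊔ S) ⊓ N = S := by
          rw [sup_eq_right.mpr hHS, inf_eq_left.mpr hSN]
        rw [heq]
        exact hSinv.1
      · -- A ≤ S ≤ B, N ≤ B : L = N
        have htgtB : tgt S = B := by rw [htgt]; dsimp only; rw [if_pos ha, if_neg hb]
        have hNB : N ≤ B := htgtB ▸ hNtgt
        have heq : (H ⊔ S) ⊓ N = N := by
          apply inf_eq_right.mpr
          calc N ≤ B := hNB
            _ = H ⊔ A := h2.symm
            _ ≤ H ⊔ S := sup_le_sup_left ha _
        rw [heq]
        exact (hseqInv (i.val + 1)).1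
    · -- S ≤ A and N ≤ A : L = S
      have hSA : S ≤ A := by
        rcases hSinv.2 with h | h | h
        · exact h
        · exact absurd h.1 ha
        · exact absurd (hAB.trans h) ha
      have htgtA : tgt S = A := by rw [htgt]; dsimp only; rw [if_neg ha]
      have hNA : N ≤ A := htgtA ▸ hNtgt
      have heq : (H ⊔ S) ⊓ N = S := by
        apply le_antisymm
        · intro x hx
          obtain ⟨hx1, hx2⟩ := Subgroup.mem_inf.mp hx
          have hcomm2 : ∀ a ∈ H, ∀ b ∈ S, a * b = b * a :=
            fun a haa b hbb => hBcomm a (hH haa) b (hAB (hSA hbb))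
          obtain ⟨h', hh', w, hw, rfl⟩ := (mem_sup_comm'' hcomm2).mp hx1
          have hh'A : h' ∈ A := by
            have hxA : h' * w ∈ A := hNA hx2
            have hwA : w ∈ A := hSA hw
            have : h' = (h' * w) * w⁻¹ := by group
            rw [this]
            exact mul_mem hxA (inv_mem hwA)
          have : h' ∈ H ⊓ A := Subgroup.mem_inf.mpr ⟨hh', hh'A⟩
          rw [h1, Subgroup.mem_bot] at this
          rw [this, one_mul]
          exact hw
        · exact le_inf le_sup_right hSN
      rw [heq]
      exact hSinv.1
  have hnorm : Subgroup.normalizer (((H ⊔ C.s i.castSucc) ⊓ C.s i.succ : Subgroup G) : Set G) = ⊤ :=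
    Subgroup.normalizer_eq_top_iff.mpr hLnormal
  rw [hnorm, Subgroup.index_top, Nat.dvd_one] at hdvd
  exact hq.ne_one hdvd



theorem statement_9 {G : Type*} [Group G] [Finite G] {p : ℕ} (hp : p.Prime)
    (P : Sylow p G) (hPn : (P : Subgroup G).Normal)
    (hPel : IsElemAbelian p (P : Subgroup G))
    (H : Subgroup G) (hHP : H ≤ P) :
    PartialPi H ↔ ∃ K : Subgroup G, Subgroup.IsComplement' H K := by
  classical
  haveI : Fact p.Prime := ⟨hp⟩
  set Ps : Subgroup G := (P : Subgroup G) with hPs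
  obtain ⟨hcomm, hexp⟩ := hPel
  haveI := hPn
  constructor
  · -- forward direction
    rintro ⟨C, hsteps⟩
    have hPidx : ¬ p ∣ Ps.index := Sylow.not_dvd_index P
    obtain ⟨k0, hk0⟩ := P.isPGroup'.exists_card_eq
    have hcop : Nat.Coprime (Nat.card Ps) Ps.index := by
      rw [show Nat.card Ps = p ^ k0 from hk0]
      exact Nat.Coprime.pow_left _ ((Nat.Prime.coprime_iff_not_dvd hp).mpr hPidx)
    obtain ⟨Q, hQc⟩ := Subgroup.exists_right_complement'_of_coprime hcop
    have hcardQ : Nat.card Q = Ps.index := by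
      have hmul := hQc.card_mul
      have hmul2 := Subgroup.card_mul_index (H := Ps)
      have hpos : 0 < Nat.card Ps := Nat.card_pos
      exact Nat.eq_of_mul_eq_mul_left hpos (by rw [hmul, hmul2])
    have hpQ : ¬ p ∣ Nat.card Q := by rw [hcardQ]; exact hPidx
    -- the chain of intersections with P
    set W : ℕ → Subgroup G := fun j => Ps ⊓ C.s ⟨min j C.n, by omega⟩ with hW
    have hW0 : W 0 = ⊥ := by
      have h0 : (⟨min 0 C.n, by omega⟩ : Fin (C.n + 1)) = 0 := by
        apply Fin.ext; simp
      rw [hW]; dsimp only; rw [h0, C.bot_eq, inf_bot_eq]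
    have hWle : ∀ j, W j ≤ Ps := fun j => inf_le_left
    have hWn : ∀ j, (W j).Normal := by
      intro j
      haveI := C.normal (⟨min j C.n, by omega⟩ : Fin (C.n + 1))
      exact Subgroup.normal_inf_normal _ _
    have hWjlt : ∀ j, ∀ hj : j < C.n, W j = Ps ⊓ C.s (Fin.castSucc ⟨j, hj⟩) := by
      intro j hj
      have : (⟨min j C.n, by omega⟩ : Fin (C.n + 1)) = Fin.castSucc ⟨j, hj⟩ := by
        apply Fin.ext; simp [Nat.min_eq_left hj.le]
      rw [hW]; dsimp only; rw [this]
    have hWjlt' : ∀ j, ∀ hj : j < C.n, W (j + 1) = Ps ⊓ C.s (Fin.succ ⟨j, hj⟩) := by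
      intro j hj
      have : (⟨min (j+1) C.n, by omega⟩ : Fin (C.n + 1)) = Fin.succ ⟨j, hj⟩ := by
        apply Fin.ext; simp [Nat.min_eq_left (Nat.succ_le_of_lt hj)]
      rw [hW]; dsimp only; rw [this]
    have hWtop : W C.n = Ps := by
      have : (⟨min C.n C.n, by omega⟩ : Fin (C.n + 1)) = Fin.last C.n := by
        apply Fin.ext; simp
      rw [hW]; dsimp only; rw [this, C.top_eq, inf_top_eq]
    have hmono : ∀ j, W j ≤ W (j + 1) := by
      intro j
      rcases Nat.lt_or_ge j C.n with hj | hj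
      · rw [hWjlt j hj, hWjlt' j hj]
        exact inf_le_inf_left _ (C.strict ⟨j, hj⟩).le
      · have he : W j = W (j + 1) := by
          rw [hW]; dsimp only
          congr 1
          apply congrArg
          apply Fin.ext
          simp [Nat.min_eq_right hj, Nat.min_eq_right (le_trans hj (Nat.le_succ j))]
        rw [he]
    -- decomposition in H ⊔ N for N normal
    have hdecomp : ∀ (N : Subgroup G), N.Normal → ∀ x ∈ H ⊔ N, ∃ h ∈ H, ∃ w ∈ N, h * w = x := by
      intro N hNn x hx
      haveI := hNn
      have hx' : x ∈ ((H ⊔ N : Subgroup G) : Set G) := hx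
      rw [Subgroup.mul_normal H N] at hx'
      obtain ⟨h, hh, w, hw, hhw⟩ := Set.mem_mul.mp hx'
      exact ⟨h, hh, w, hw, hhw⟩
    -- each subgroup (H ⊔ G_{i-1}) ⊓ G_i is normal in G
    have hLnorm : ∀ i : Fin C.n, ((H ⊔ C.s i.castSucc) ⊓ C.s i.succ).Normal := by
      intro i
      set Gi := C.s i.castSucc with hGi
      set Gi1 := C.s i.succ with hGi1
      haveI hGin : Gi.Normal := C.normal _
      haveI hGi1n : Gi1.Normal := C.normal _
      set L := (H ⊔ Gi) ⊓ Gi1 with hL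
      have hconj : ∀ u ∈ Ps, ∀ x ∈ L, u * x * u⁻¹ ∈ L := by
        intro u hu x hx
        obtain ⟨hx1, hx2⟩ := Subgroup.mem_inf.mp hx
        refine Subgroup.mem_inf.mpr ⟨?_, hGi1n.conj_mem x hx2 u⟩
        obtain ⟨h, hh, w, hw, rfl⟩ := hdecomp Gi hGin x hx1
        have hcu : u * (h * w) * u⁻¹ = h * (u * w * u⁻¹) := by
          have : u * h = h * u := hcomm u hu h (hHP hh)
          calc u * (h * w) * u⁻¹ = (u * h) * w * u⁻¹ := by group
            _ = (h * u) * w * u⁻¹ := by rw [this]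
            _ = h * (u * w * u⁻¹) := by group
        rw [hcu]
        exact mul_mem (Subgroup.mem_sup_left hh) (Subgroup.mem_sup_right (hGin.conj_mem w hw u))
      have hPnormalizer : Ps ≤ Subgroup.normalizer (L : Set G) := by
        intro u hu
        rw [Subgroup.mem_normalizer_iff]
        intro x
        constructor
        · intro hx
          exact hconj u hu x hx
        · intro hx
          have h2 := hconj u⁻¹ (inv_mem hu) _ hx
          have : u⁻¹ * (u * x * u⁻¹) * u⁻¹⁻¹ = x := by group
          rwa [this] at h2
      have hidx : (Subgroup.normalizer (L : Set G)).index ∣ Ps.index := Subgroup.index_dvd_of_le hPnormalizer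
      have hone : (Subgroup.normalizer (L : Set G)).index = 1 := by
        by_contra hne
        obtain ⟨q, hq, hqd⟩ := Nat.exists_prime_and_dvd hne
        have hr := hsteps i q hq hqd
        have hGiL : Gi ≤ L := le_inf le_sup_right (C.strict i).le
        have hLH : L ≤ H ⊔ Gi := inf_le_left
        have hcardL : Nat.card Gi * Gi.relIndex L = Nat.card L := by
          have h1 := Subgroup.card_mul_index (Gi.subgroupOf L)
          have h2 : Nat.card (Gi.subgroupOf L) = Nat.card Gi :=
            Nat.card_congr (Subgroup.subgroupOfEquivOfLe hGiL).toEquiv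
          rw [h2] at h1
          exact h1
        have hratio : Nat.card L / Nat.card Gi = Gi.relIndex L := by
          rw [← hcardL, Nat.mul_div_cancel_left _ Nat.card_pos]
        have hd1 : Gi.relIndex L ∣ Gi.relIndex (H ⊔ Gi) :=
          ⟨L.relIndex (H ⊔ Gi), (Subgroup.relIndex_mul_relIndex Gi L (H ⊔ Gi) hGiL hLH).symm⟩
        have hd2 : Gi.relIndex (H ⊔ Gi) ∣ Nat.card H := by
          set φ : H →* (H ⊔ Gi : Subgroup G) ⧸ (Gi.subgroupOf (H ⊔ Gi)) :=
            (QuotientGroup.mk' (Gi.subgroupOf (H ⊔ Gi))).comp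
              (Subgroup.inclusion le_sup_left) with hφ
          have hφs : Function.Surjective φ := by
            intro y
            obtain ⟨x, rfl⟩ := QuotientGroup.mk'_surjective _ y
            obtain ⟨h, hh, w, hw, hhw⟩ := hdecomp Gi hGin x.1 x.2
            refine ⟨⟨h, hh⟩, ?_⟩
            show ((Subgroup.inclusion le_sup_left ⟨h, hh⟩ : (H ⊔ Gi : Subgroup G)) :
              (H ⊔ Gi : Subgroup G) ⧸ (Gi.subgroupOf (H ⊔ Gi))) = ↑x
            apply QuotientGroup.eq.mpr
            refine Subgroup.mem_subgroupOf.mpr ?_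
            have hcoe2 : ((((Subgroup.inclusion le_sup_left ⟨h, hh⟩ :
                (H ⊔ Gi : Subgroup G)))⁻¹ * x : (H ⊔ Gi : Subgroup G)) : G) =
                h⁻¹ * (x : G) := rfl
            have hxw : h⁻¹ * (x : G) = w := by
              rw [← hhw]; group
            show ((((Subgroup.inclusion le_sup_left ⟨h, hh⟩ :
              (H ⊔ Gi : Subgroup G)))⁻¹ * x : (H ⊔ Gi : Subgroup G)) : G) ∈ Gi
            rw [hcoe2, hxw]
            exact hw
          have hdvd := Subgroup.card_dvd_of_surjective φ hφs
          have : Gi.relIndex (H ⊔ Gi) = Nat.card ((H ⊔ Gi : Subgroup G) ⧸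
              (Gi.subgroupOf (H ⊔ Gi))) := Subgroup.index_eq_card _
          rw [this]
          exact hdvd
        have hqH : q ∣ Nat.card H := by
          have h1 : q ∣ Gi.relIndex L := by rw [← hratio]; exact hr
          exact h1.trans (hd1.trans hd2)
        have hHp : IsPGroup p H := P.isPGroup'.to_le hHP
        obtain ⟨a, haH⟩ := hHp.exists_card_eq
        rw [haH] at hqH
        have hqp : q = p := (Nat.prime_dvd_prime_iff_eq hq hp).mp (hq.dvd_of_dvd_pow hqH)
        exact hPidx (hqp ▸ hqd.trans hidx)
      exact Subgroup.normalizer_eq_top_iff.mp (Subgroup.index_eq_one.mp hone)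
    -- irreducibility of the chain steps
    have hirr : ∀ j < C.n, ∀ X : Subgroup G, X.Normal → X ≤ Ps → W j ≤ X → X ≤ W (j + 1) →
        X = W j ∨ X = W (j + 1) := by
      intro j hj X hXn hXP hX1 hX2
      set i : Fin C.n := ⟨j, hj⟩ with hi
      rw [hWjlt j hj] at hX1 ⊢
      rw [hWjlt' j hj] at hX2 ⊢
      set Gi := C.s i.castSucc with hGi
      set Gi1 := C.s i.succ with hGi1
      haveI hGin : Gi.Normal := C.normal _
      haveI := hXn
      have hXGn : (X ⊔ Gi).Normal := Subgroup.sup_normal X Gi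
      have hbetween1 : Gi ≤ X ⊔ Gi := le_sup_right
      have hbetween2 : X ⊔ Gi ≤ Gi1 := sup_le (hX2.trans inf_le_right) (C.strict i).le
      rcases C.chief i (X ⊔ Gi) hXGn hbetween1 hbetween2 with h | h
      · left
        apply le_antisymm
        · exact le_inf hXP (le_sup_left.trans h.le)
        · exact hX1
      · right
        apply le_antisymm hX2
        intro x hx
        obtain ⟨hxP, hxGi1⟩ := Subgroup.mem_inf.mp hx
        have hxXG : x ∈ X ⊔ Gi := by rw [h]; exact hxGi1
        have hx' : x ∈ ((X ⊔ Gi : Subgroup G) : Set G) := hxXG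
        rw [Subgroup.mul_normal X Gi] at hx'
        obtain ⟨y, hy, g, hg, hyg⟩ := Set.mem_mul.mp hx'
        have hgPs : g ∈ Ps := by
          have : g = y⁻¹ * x := by rw [← hyg]; group
          rw [this]
          exact mul_mem (inv_mem (hXP hy)) hxP
        have hgW : g ∈ Ps ⊓ Gi := Subgroup.mem_inf.mpr ⟨hgPs, hg⟩
        have : x = y * g := hyg.symm
        rw [this]
        exact mul_mem hy (hX1 hgW)
    -- the subgroups (H ⊔ W j) ⊓ W (j+1) are normal
    have hU : ∀ j < C.n, ((H ⊔ W j) ⊓ W (j + 1)).Normal := by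
      intro j hj
      set i : Fin C.n := ⟨j, hj⟩ with hi
      set Gi := C.s i.castSucc with hGi
      set Gi1 := C.s i.succ with hGi1
      haveI hGin : Gi.Normal := C.normal _
      have heq : (H ⊔ W j) ⊓ W (j + 1) = ((H ⊔ Gi) ⊓ Gi1) ⊓ Ps := by
        rw [hWjlt j hj, hWjlt' j hj, ← hGi, ← hGi1]
        apply le_antisymm
        · refine le_inf (le_inf ?_ ?_) ?_
          · exact inf_le_left.trans (sup_le_sup_left inf_le_right _)
          · exact inf_le_right.trans inf_le_right
          · exact inf_le_right.trans inf_le_left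
        · intro x hx
          obtain ⟨hx12, hx3⟩ := Subgroup.mem_inf.mp hx
          obtain ⟨hx1, hx2⟩ := Subgroup.mem_inf.mp hx12
          obtain ⟨h, hh, w, hw, hhw⟩ := hdecomp Gi hGin x hx1
          have hwPs : w ∈ Ps := by
            have : w = h⁻¹ * x := by rw [← hhw]; group
            rw [this]
            exact mul_mem (inv_mem (hHP hh)) hx3
          refine Subgroup.mem_inf.mpr ⟨?_, Subgroup.mem_inf.mpr ⟨hx3, hx2⟩⟩
          rw [← hhw]
          exact mul_mem (Subgroup.mem_sup_left hh)
            (Subgroup.mem_sup_right (Subgroup.mem_inf.mpr ⟨hwPs, hw⟩))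
      rw [heq]
      haveI := hLnorm i
      exact Subgroup.normal_inf_normal _ _
    -- apply the chain complement lemma
    have hHWn : H ≤ W C.n := by rw [hWtop]; exact hHP
    obtain ⟨K₀, hK₀n, hK₀le, hK₀disj, hK₀sup⟩ :=
      chain_complement hp hcomm hexp hQc hpQ W hW0 hmono hWle hWn C.n H hHWn hirr hU
    have hK₀Ps : K₀ ≤ Ps := hK₀le.trans (by rw [hWtop])
    have hK₀supP : H ⊔ K₀ = Ps := by rw [hK₀sup, hWtop]
    -- assemble the final complement
    refine ⟨K₀ ⊔ Q, Subgroup.isComplement'_of_disjoint_and_mul_eq_univ ?_ ?_⟩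
    · rw [disjoint_iff]
      rw [Subgroup.eq_bot_iff_forall]
      intro x hx
      obtain ⟨hxH, hxK⟩ := Subgroup.mem_inf.mp hx
      haveI := hK₀n
      have hx' : x ∈ ((K₀ ⊔ Q : Subgroup G) : Set G) := hxK
      rw [Subgroup.normal_mul K₀ Q] at hx'
      obtain ⟨k, hk, q', hq', hkq⟩ := Set.mem_mul.mp hx'
      have hq'Ps : q' ∈ Ps := by
        have : q' = k⁻¹ * x := by rw [← hkq]; group
        rw [this]
        exact mul_mem (inv_mem (hK₀Ps hk)) (hHP hxH)
      have hq'1 : q' = 1 := by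
        have := Subgroup.disjoint_def.mp hQc.disjoint hq'Ps hq'
        exact this
      rw [hq'1, mul_one] at hkq
      have : x ∈ H ⊓ K₀ := Subgroup.mem_inf.mpr ⟨hxH, hkq ▸ hk⟩
      rw [hK₀disj, Subgroup.mem_bot] at this
      exact this
    · apply Set.eq_univ_of_forall
      intro g
      have huniv := hQc.mul_eq
      have hgu : g ∈ (Set.univ : Set G) := trivial
      rw [← huniv] at hgu
      obtain ⟨w, hw, q', hq', hwq⟩ := Set.mem_mul.mp hgu
      have hwHK : w ∈ H ⊔ K₀ := by rw [hK₀supP]; exact hw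
      have hcomm2 : ∀ a ∈ H, ∀ b ∈ K₀, a * b = b * a :=
        fun a ha b hb => hcomm a (hHP ha) b (hK₀Ps hb)
      obtain ⟨h, hh, k, hk, hhk⟩ := (mem_sup_comm'' hcomm2).mp hwHK
      refine Set.mem_mul.mpr ⟨h, hh, k * q',
        mul_mem (Subgroup.mem_sup_left hk) (Subgroup.mem_sup_right hq'), ?_⟩
      rw [← hwq, ← hhk]
      group
  · -- backward direction
    rintro ⟨K, hK⟩
    set Cc : Subgroup G := K ⊓ Ps with hCc
    have hCcn : Cc.Normal := by
      constructor
      intro x hx g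
      obtain ⟨hxK, hxP⟩ := Subgroup.mem_inf.mp hx
      obtain ⟨⟨h, k⟩, hg⟩ := (hK.existsUnique g).exists
      simp only at hg
      have hy : (k : G) * x * (k : G)⁻¹ ∈ Cc := Subgroup.mem_inf.mpr
        ⟨mul_mem (mul_mem k.2 hxK) (inv_mem k.2), hPn.conj_mem x hxP k⟩
      have hyP : (k : G) * x * (k : G)⁻¹ ∈ Ps := (Subgroup.mem_inf.mp hy).2
      have hgx : g * x * g⁻¹ = (h : G) * ((k : G) * x * (k : G)⁻¹) * (h : G)⁻¹ := by
        rw [← hg]; group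
      have hcomm3 : (h : G) * ((k : G) * x * (k : G)⁻¹) * (h : G)⁻¹ =
          (k : G) * x * (k : G)⁻¹ := by
        have := hcomm (h : G) (hHP h.2) _ hyP
        rw [this]; group
      rw [hgx, hcomm3]
      exact hy
    have h1 : H ⊓ Cc = ⊥ := by
      rw [Subgroup.eq_bot_iff_forall]
      intro x hx
      obtain ⟨hxH, hxC⟩ := Subgroup.mem_inf.mp hx
      exact Subgroup.disjoint_def.mp hK.disjoint hxH (Subgroup.mem_inf.mp hxC).1
    have h2 : H ⊔ Cc = Ps := by
      apply le_antisymm (sup_le hHP inf_le_right)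
      intro x hxP
      obtain ⟨⟨h, k⟩, hhk⟩ := (hK.existsUnique x).exists
      simp only at hhk
      have hkPs : (k : G) ∈ Ps := by
        have : (k : G) = (h : G)⁻¹ * x := by rw [← hhk]; group
        rw [this]
        exact mul_mem (inv_mem (hHP h.2)) hxP
      have : x = (h : G) * (k : G) := hhk.symm
      rw [this]
      exact mul_mem (Subgroup.mem_sup_left h.2)
        (Subgroup.mem_sup_right (Subgroup.mem_inf.mpr ⟨k.2, hkPs⟩))
    exact exists_partialPi_series Cc Ps hCcn hPn inf_le_right hcomm H hHP h1 h2
end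

section
/- Let p be a prime and H a finite p'-group acting faithfully and irreducibly on an elementary abelian p-group V (equivalently, V is a faithful irreducible F_p[H]-module) with dim_{F_p} V a prime number. Then H is cyclic if and only if V is not absolutely irreducible. -/
variable {G : Type*} [Group G]

theorem statement_10 {p : ℕ} [Fact p.Prime] (H : Type*) [Group H] [Finite H]
    (V : Type*) [AddCommGroup V] [Module (ZMod p) V] [Finite V] [Nontrivial V]
    [DistribMulAction H V]
    (hlin : ∀ (h : H) (c : ZMod p) (v : V), h • (c • v) = c • (h • v))
    (hfaithful : ∀ h : H, (∀ v : V, h • v = v) → h = 1)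
    (hp' : ¬ p ∣ Nat.card H)
    (hirr : ∀ W : Submodule (ZMod p) V, (∀ h : H, ∀ w ∈ W, h • w ∈ W) → W = ⊥ ∨ W = ⊤)
    (hdim : (Module.finrank (ZMod p) V).Prime) :
    IsCyclic H ↔
      ¬ (∀ f : V →ₗ[ZMod p] V, (∀ (h : H) (v : V), f (h • v) = h • f v) →
          ∃ c : ZMod p, ∀ v : V, f v = c • v) := by
  classical
  have hp2 : 2 ≤ p := (Fact.out : p.Prime).two_le
  -- Schur: nonzero equivariant endomorphisms are bijective
  have schur : ∀ f : V →ₗ[ZMod p] V, (∀ (h : H) (v : V), f (h • v) = h • f v) →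
      f ≠ 0 → Function.Bijective f := by
    intro f hf hne
    have hker : LinearMap.ker f = ⊥ := by
      rcases hirr (LinearMap.ker f) (fun h w hw => by
        simp only [LinearMap.mem_ker] at hw ⊢
        rw [hf, hw, smul_zero]) with h1 | h1
      · exact h1
      · exact absurd (LinearMap.ker_eq_top.mp h1) hne
    exact Finite.injective_iff_bijective.mp (LinearMap.ker_eq_bot.mp hker)
  constructor
  · -- cyclic implies not absolutely irreducible
    intro hc habs
    obtain ⟨g, hg⟩ := hc.exists_generator
    have hcomm : ∀ a b : H, a * b = b * a := by
      intro a b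
      obtain ⟨m, hm⟩ := Subgroup.mem_zpowers_iff.mp (hg a)
      obtain ⟨n, hn⟩ := Subgroup.mem_zpowers_iff.mp (hg b)
      rw [← hm, ← hn]
      exact (Commute.zpow_zpow_self g m n)
    have key : ∀ h : H, ∃ c : ZMod p, ∀ v : V, h • v = c • v := by
      intro h
      obtain ⟨c, hcf⟩ := habs
        { toFun := fun v => h • v
          map_add' := fun a b => smul_add h a b
          map_smul' := fun c v => hlin h c v }
        (by
          intro h' v
          show h • h' • v = h' • h • v
          rw [← mul_smul, ← mul_smul, hcomm])
      exact ⟨c, fun v => hcf v⟩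
    obtain ⟨v, hv⟩ := exists_ne (0 : V)
    have hW : (Submodule.span (ZMod p) {v}) = ⊥ ∨ (Submodule.span (ZMod p) {v}) = ⊤ := by
      apply hirr
      intro h w hw
      rw [Submodule.mem_span_singleton] at hw ⊢
      obtain ⟨a, rfl⟩ := hw
      obtain ⟨c, hc⟩ := key h
      exact ⟨a * c, by rw [hlin, hc, mul_smul, smul_comm]⟩
    rcases hW with h1 | h1
    · have hvmem : v ∈ Submodule.span (ZMod p) {v} := Submodule.mem_span_singleton_self v
      rw [h1] at hvmem
      exact hv ((Submodule.mem_bot (ZMod p)).mp hvmem)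
    · have : Module.finrank (ZMod p) V = 1 :=
        (finrank_eq_one_iff_of_nonzero v hv).mpr h1
      rw [this] at hdim
      exact Nat.not_prime_one hdim
  · -- not absolutely irreducible implies cyclic
    intro hnot
    push_neg at hnot
    obtain ⟨f₀, hf₀equi, hf₀ns⟩ := hnot
    haveI hfinEnd : Finite (Module.End (ZMod p) V) :=
      Finite.of_injective (fun f => (f : V → V)) DFunLike.coe_injective
    set S : Subalgebra (ZMod p) (Module.End (ZMod p) V) :=
      Algebra.adjoin (ZMod p) {f₀} with hS
    -- every element of S is H-equivariant
    have hequi : ∀ g ∈ S, ∀ (h : H) (v : V), g (h • v) = h • g v := by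
      intro g hg
      induction hg using Algebra.adjoin_induction with
      | mem x hx =>
        rw [Set.mem_singleton_iff] at hx
        subst hx
        exact hf₀equi
      | algebraMap r =>
        intro h v
        simp only [Module.algebraMap_end_apply]
        rw [hlin]
      | add x y hx hy ihx ihy =>
        intro h v
        simp only [LinearMap.add_apply, ihx, ihy, smul_add]
      | mul x y hx hy ihx ihy =>
        intro h v
        simp only [Module.End.mul_apply, ihx, ihy]
    -- S is commutative
    have hcommS : ∀ g₁ ∈ S, ∀ g₂ ∈ S, g₁ * g₂ = g₂ * g₁ := by
      intro g₁ h₁ g₂ h₂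
      rw [hS, Algebra.adjoin_singleton_eq_range_aeval] at h₁ h₂
      obtain ⟨P₁, rfl⟩ := h₁
      obtain ⟨P₂, rfl⟩ := h₂
      rw [← map_mul, ← map_mul, mul_comm]
    have hone_ne : (1 : Module.End (ZMod p) V) ≠ 0 := by
      intro h
      obtain ⟨v, hv⟩ := exists_ne (0 : V)
      exact hv (by simpa using LinearMap.congr_fun h v)
    haveI : Nontrivial (Module.End (ZMod p) V) := nontrivial_of_ne 1 0 hone_ne
    -- inverses inside S
    have hinv : ∀ g ∈ S, g ≠ 0 → ∃ b ∈ S, g * b = 1 := by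
      intro g hg hne
      have hbij := schur g (hequi g hg) hne
      have hu : IsUnit g := (Module.End.isUnit_iff g).mpr hbij
      obtain ⟨u, rfl⟩ := hu
      haveI : Finite (Module.End (ZMod p) V)ˣ := inferInstance
      have hcard : 0 < Nat.card (Module.End (ZMod p) V)ˣ := Nat.card_pos
      have hpow : (u : Module.End (ZMod p) V) ^ Nat.card (Module.End (ZMod p) V)ˣ = 1 := by
        rw [← Units.val_pow_eq_pow_val, pow_card_eq_one', Units.val_one]
      refine ⟨(u : Module.End (ZMod p) V) ^ (Nat.card (Module.End (ZMod p) V)ˣ - 1),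
        pow_mem hg _, ?_⟩
      rw [← pow_succ', Nat.sub_add_cancel hcard, hpow]
    -- S is a field
    have hfield : IsField S := by
      refine ⟨⟨⟨1, one_mem S⟩, ⟨0, zero_mem S⟩, fun h => hone_ne (congrArg Subtype.val h)⟩,
        fun a b => Subtype.ext (hcommS a.1 a.2 b.1 b.2), ?_⟩
      intro a ha
      have ha' : (a : Module.End (ZMod p) V) ≠ 0 := fun h => ha (Subtype.ext h)
      obtain ⟨b, hbS, hb⟩ := hinv a.1 a.2 ha'
      exact ⟨⟨b, hbS⟩, Subtype.ext hb⟩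
    letI : Field S := hfield.toField
    -- V as an S-module
    letI : SMul S V := ⟨fun s v => s.1 v⟩
    have smul_def : ∀ (s : S) (w : V), s • w = s.1 w := fun s w => rfl
    letI : Module S V :=
      { one_smul := fun v => by rw [smul_def]; simp
        mul_smul := fun s t v => by
          rw [smul_def, smul_def, smul_def]
          simp [Module.End.mul_apply]
        smul_zero := fun s => map_zero s.1
        smul_add := fun s a b => map_add s.1 a b
        add_smul := fun s t v => by
          rw [smul_def, smul_def, smul_def]
          simp [LinearMap.add_apply]
        zero_smul := fun v => by rw [smul_def]; simp }
    haveI : Finite S := Finite.of_injective (Subtype.val) Subtype.val_injective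
    haveI : Fintype V := Fintype.ofFinite V
    haveI : Fintype S := Fintype.ofFinite S
    -- cardinality counting
    have c1 : Fintype.card V = p ^ Module.finrank (ZMod p) V := by
      have := Module.card_eq_pow_finrank (K := ZMod p) (V := V)
      rwa [ZMod.card] at this
    have c2 : Fintype.card S = p ^ Module.finrank (ZMod p) S := by
      have := Module.card_eq_pow_finrank (K := ZMod p) (V := S)
      rwa [ZMod.card] at this
    have c3 : Fintype.card V = Fintype.card S ^ Module.finrank S V :=
      Module.card_eq_pow_finrank (K := S) (V := V)
    have hkd : Module.finrank (ZMod p) V =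
        Module.finrank (ZMod p) S * Module.finrank S V := by
      apply Nat.pow_right_injective hp2
      show p ^ Module.finrank (ZMod p) V =
        p ^ (Module.finrank (ZMod p) S * Module.finrank S V)
      rw [← c1, c3, c2, ← pow_mul]
    have hk1 : Module.finrank (ZMod p) S ≠ 1 := by
      intro h1
      rw [Subalgebra.finrank_eq_one_iff] at h1
      have hf₀S : f₀ ∈ S := Algebra.self_mem_adjoin_singleton (ZMod p) f₀
      rw [h1, Algebra.mem_bot] at hf₀S
      obtain ⟨c, hc⟩ := hf₀S
      obtain ⟨v, hvne⟩ := hf₀ns c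
      exact hvne (by rw [← hc, Module.algebraMap_end_apply])
    have hd1 : Module.finrank S V = 1 := by
      have hdvd : Module.finrank (ZMod p) S ∣ Module.finrank (ZMod p) V :=
        ⟨Module.finrank S V, hkd⟩
      rcases hdim.eq_one_or_self_of_dvd (Module.finrank (ZMod p) S) hdvd with h | h
      · exact absurd h hk1
      · have := hkd
        rw [h] at this
        nth_rewrite 1 [← mul_one (Module.finrank (ZMod p) V)] at this
        exact (Nat.eq_of_mul_eq_mul_left hdim.pos this.symm)
    haveI : Module.Free S V := Module.Free.of_divisionRing S V
    obtain ⟨v₀, hv₀, hspan⟩ := finrank_eq_one_iff'.mp hd1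
    have ext : ∀ s t : S, (∀ w : V, s • w = t • w) → s = t := by
      intro s t h
      exact Subtype.ext (LinearMap.ext fun w => h w)
    -- every h acts as a scalar from S
    have hrep : ∀ h : H, ∃ s : S, ∀ w : V, h • w = s • w := by
      intro h
      obtain ⟨s, hs⟩ := hspan (h • v₀)
      refine ⟨s, fun w => ?_⟩
      obtain ⟨c, hc⟩ := hspan w
      rw [← hc]
      calc h • (c • v₀) = c • (h • v₀) := by
            rw [smul_def, smul_def]; exact (hequi c.1 c.2 h v₀).symm
        _ = c • (s • v₀) := by rw [hs]
        _ = (c * s) • v₀ := (mul_smul c s v₀).symm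
        _ = (s * c) • v₀ := by rw [mul_comm]
        _ = s • (c • v₀) := mul_smul s c v₀
    choose σ hσ using hrep
    have hφmul : ∀ a b : H, σ (a * b) = σ a * σ b := by
      intro a b
      apply ext
      intro w
      calc σ (a * b) • w = (a * b) • w := (hσ (a * b) w).symm
        _ = a • (b • w) := mul_smul a b w
        _ = a • (σ b • w) := by rw [hσ b w]
        _ = σ a • (σ b • w) := hσ a (σ b • w)
        _ = (σ a * σ b) • w := (mul_smul (σ a) (σ b) w).symm
    have hφone : σ 1 = 1 := by
      apply ext
      intro w
      calc σ (1 : H) • w = (1 : H) • w := (hσ 1 w).symm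
        _ = w := one_smul H w
        _ = (1 : S) • w := by rw [smul_def]; simp
    let φ : H →* S := ⟨⟨σ, hφone⟩, hφmul⟩
    have hφinj : Function.Injective φ := by
      intro a b hab
      have hab' : ∀ w : V, a • w = b • w := by
        intro w
        rw [hσ a w, hσ b w]
        show (φ a) • w = (φ b) • w
        rw [hab]
      have : (b⁻¹ * a) = 1 := by
        apply hfaithful
        intro v
        rw [mul_smul, hab' v, ← mul_smul, inv_mul_cancel, one_smul]
      rw [inv_mul_eq_one] at this
      exact this.symm
    let ψ : H →* Sˣ := φ.toHomUnits
    have hψinj : Function.Injective ψ := by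
      intro a b hab
      apply hφinj
      have := congrArg (Units.val) hab
      simpa [ψ, MonoidHom.coe_toHomUnits] using this
    haveI : Finite Sˣ := inferInstance
    haveI : IsCyclic Sˣ := inferInstance
    haveI : IsCyclic ψ.range := Subgroup.isCyclic _
    exact isCyclic_of_surjective (MonoidHom.ofInjective hψinj).symm
      (MulEquiv.surjective _)
end
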